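/- arXiv:1502.01434 — 4 statements merged into one kernel-verified Lean document; each statement's English description precedes it below -/
import Mathlib

section
/- Let n ≥ 3 and let G be a nonempty set of 2-element subsets of {1,…,n} (i.e., a set of edges of the complete graph K_n). Then G is an arrangement of smallest minors in Gr⁺(2,n) if and only if every pair of edges in G is non-crossing or shares a common vertex. -/
/-!
If crossing edges `{p, r}` and `{q, s}`, `p < q < r < s`, both carry the smallest minor `m`, the
Plücker relation `Δ_pr Δ_qs = Δ_pq Δ_rs + Δ_ps Δ_qr` gives `m² ≥ 2 m²`, which is absurd.

Conversely, normalise the smallest minor to `1` and realise a non-crossing graph on any finite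
ordered set `S` by strong induction on `S`. An edge `{c, d}` with points of `S` both inside and
outside `[c, d]` splits `S` into `S ∩ [c, d]` and `S \ (c, d)`; their realisations are glued by the
linear map matching the two copies of `v c, v d`, and a point strictly inside `(c, d)` then has
minor at least `1 + 1` with every point outside `[c, d]`, by expanding it in `v c, v d`. Without
such an edge, every edge except `{min S, max S}` joins neighbours in `S`, and the points are placed
on a half-circle.
-/

namespace Stmt0

/-- The `k×k` minor of a `k×n` matrix on the columns indexed by a `k`-element set `I`. -/
noncomputable def minorOn (k n : ℕ) (A : Matrix (Fin k) (Fin n) ℝ) (I : Finset (Fin n)) : ℝ :=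
  if h : I.card = k then (A.submatrix id fun i => I.orderEmbOfFin h i).det else 0

/-- `A` represents a point of the positive Grassmannian `Gr⁺(k,n)`:
all maximal `k×k` minors are positive. -/
def PosGr (k n : ℕ) (A : Matrix (Fin k) (Fin n) ℝ) : Prop :=
  ∀ I : Finset (Fin n), I.card = k → 0 < minorOn k n A I

/-- An arrangement of smallest minors in `Gr⁺(k,n)`. -/
def IsArrSmallest (k n : ℕ) (𝒥 : Finset (Finset (Fin n))) : Prop :=
  𝒥.Nonempty ∧ (∀ I ∈ 𝒥, I.card = k) ∧
    ∃ A : Matrix (Fin k) (Fin n) ℝ, PosGr k n A ∧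
      (∀ I ∈ 𝒥, ∀ J ∈ 𝒥, minorOn k n A I = minorOn k n A J) ∧
      ∀ K : Finset (Fin n), K.card = k → K ∉ 𝒥 → ∀ I ∈ 𝒥, minorOn k n A I < minorOn k n A K

/-- Two edges of `K_n` are crossing. -/
def Crossing {n : ℕ} (e f : Finset (Fin n)) : Prop :=
  ∃ a b c d : Fin n, a < b ∧ c < d ∧ e = {a, b} ∧ f = {c, d} ∧
    ((a < c ∧ c < b ∧ b < d) ∨ (c < a ∧ a < d ∧ d < b))

def cross (u v : ℝ × ℝ) : ℝ := u.1 * v.2 - u.2 * v.1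

theorem cross_self (u : ℝ × ℝ) : cross u u = 0 := by
  simp only [cross]; ring

theorem cross_mul_cross (a b c d : ℝ × ℝ) :
    cross a c * cross b d = cross a b * cross c d + cross a d * cross b c := by
  simp only [cross]; ring

def transport (C D C' D' u : ℝ × ℝ) : ℝ × ℝ := cross u D • C' + cross C u • D'

section Transport

variable {C D C' D' : ℝ × ℝ}

theorem transport_left (h : cross C D = 1) : transport C D C' D' C = C' := by
  rw [transport, h, cross_self, one_smul, zero_smul, add_zero]

theorem transport_right (h : cross C D = 1) : transport C D C' D' D = D' := by
  rw [transport, h, cross_self, one_smul, zero_smul, zero_add]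

theorem cross_transport_transport (u w : ℝ × ℝ) :
    cross (transport C D C' D' u) (transport C D C' D' w) =
      cross C D * cross C' D' * cross u w := by
  simp only [transport, cross, Prod.fst_add, Prod.snd_add, Prod.smul_fst, Prod.smul_snd,
    smul_eq_mul]
  ring

theorem one_lt_cross_transport_left {u x : ℝ × ℝ} (hD : 1 ≤ cross u D) (hC : 1 ≤ cross C u)
    (hC' : 1 ≤ cross C' x) (hD' : 1 ≤ cross D' x) : 1 < cross (transport C D C' D' u) x := by
  have : cross (transport C D C' D' u) x = cross u D * cross C' x + cross C u * cross D' x := by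
    simp only [transport, cross, Prod.fst_add, Prod.snd_add, Prod.smul_fst, Prod.smul_snd,
      smul_eq_mul]
    ring
  rw [this]
  nlinarith

theorem one_lt_cross_transport_right {u x : ℝ × ℝ} (hD : 1 ≤ cross u D) (hC : 1 ≤ cross C u)
    (hC' : 1 ≤ cross x C') (hD' : 1 ≤ cross x D') : 1 < cross x (transport C D C' D' u) := by
  have : cross x (transport C D C' D' u) = cross u D * cross x C' + cross C u * cross x D' := by
    simp only [transport, cross, Prod.fst_add, Prod.snd_add, Prod.smul_fst, Prod.smul_snd,
      smul_eq_mul]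
    ring
  rw [this]
  nlinarith

end Transport

section Realization

variable {α : Type*} [LinearOrder α]

def NonCrossing (G : Set (Finset α)) : Prop :=
  ∀ ⦃a b c d : α⦄, a < c → c < b → b < d → {a, b} ∈ G → {c, d} ∈ G → False

def Realizes (S : Finset α) (G : Set (Finset α)) (v : α → ℝ × ℝ) : Prop :=
  ∀ i ∈ S, ∀ j ∈ S, i < j → 1 ≤ cross (v i) (v j) ∧ (cross (v i) (v j) = 1 ↔ {i, j} ∈ G)

variable {S : Finset α} {G : Set (Finset α)}

noncomputable def glueAlong (c d : α) (v w : α → ℝ × ℝ) (z : α) : ℝ × ℝ :=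
  if c < z ∧ z < d then transport (w c) (w d) (v c) (v d) (w z) else v z

theorem glueAlong_eq_outer {c d z : α} {v w : α → ℝ × ℝ} (h : ¬(c < z ∧ z < d)) :
    glueAlong c d v w z = v z :=
  if_neg h

theorem glueAlong_eq_transport {c d z : α} {v w : α → ℝ × ℝ} (hw : cross (w c) (w d) = 1)
    (hcz : c ≤ z) (hzd : z ≤ d) :
    glueAlong c d v w z = transport (w c) (w d) (v c) (v d) (w z) := by
  unfold glueAlong
  split_ifs with h
  · rfl
  rcases hcz.eq_or_lt with rfl | hcz
  · exact (transport_left hw).symm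
  obtain rfl : z = d := hzd.eq_or_lt.resolve_right fun hzd => h ⟨hcz, hzd⟩
  exact (transport_right hw).symm

theorem realizes_glueAlong (hG : NonCrossing G) {c d : α} (hc : c ∈ S) (hd : d ∈ S)
    (hcd : c < d) (hcdG : {c, d} ∈ G) {v w : α → ℝ × ℝ}
    (hv : Realizes (S.filter fun z => ¬(c < z ∧ z < d)) G v)
    (hw : Realizes (S.filter fun z => c ≤ z ∧ z ≤ d) G w) :
    Realizes S G (glueAlong c d v w) := by
  have hvS : ∀ z ∈ S, ¬(c < z ∧ z < d) → z ∈ S.filter fun z => ¬(c < z ∧ z < d) :=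
    fun z hz h => Finset.mem_filter.2 ⟨hz, h⟩
  have hwS : ∀ z ∈ S, c ≤ z → z ≤ d → z ∈ S.filter fun z => c ≤ z ∧ z ≤ d :=
    fun z hz h h' => Finset.mem_filter.2 ⟨hz, h, h'⟩
  have hw1 : cross (w c) (w d) = 1 :=
    (hw c (hwS c hc le_rfl hcd.le) d (hwS d hd hcd.le le_rfl) hcd).2.2 hcdG
  have hv1 : cross (v c) (v d) = 1 :=
    (hv c (hvS c hc (by simp)) d (hvS d hd (by simp)) hcd).2.2 hcdG
  intro i hi j hj hij
  by_cases hclosed : (c ≤ i ∧ i ≤ d) ∧ c ≤ j ∧ j ≤ d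
  · obtain ⟨⟨hci, hid⟩, hcj, hjd⟩ := hclosed
    rw [glueAlong_eq_transport hw1 hci hid, glueAlong_eq_transport hw1 hcj hjd,
      cross_transport_transport, hw1, hv1, one_mul, one_mul]
    exact hw i (hwS i hi hci hid) j (hwS j hj hcj hjd) hij
  by_cases hopen : ¬(c < i ∧ i < d) ∧ ¬(c < j ∧ j < d)
  · rw [glueAlong_eq_outer hopen.1, glueAlong_eq_outer hopen.2]
    exact hv i (hvS i hi hopen.1) j (hvS j hj hopen.2) hij
  suffices 1 < cross (glueAlong c d v w i) (glueAlong c d v w j) ∧ {i, j} ∉ G from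
    ⟨this.1.le, iff_of_false this.1.ne' this.2⟩
  rcases not_and_or.1 hopen with hi' | hj'
  · obtain ⟨hci, hid⟩ := not_not.1 hi'
    have hdj : d < j := not_le.1 fun hjd => hclosed ⟨⟨hci.le, hid.le⟩, (hci.trans hij).le, hjd⟩
    have hj' : ¬(c < j ∧ j < d) := fun h => lt_asymm h.2 hdj
    rw [glueAlong_eq_transport hw1 hci.le hid.le, glueAlong_eq_outer hj']
    exact ⟨one_lt_cross_transport_left
      (hw i (hwS i hi hci.le hid.le) d (hwS d hd hcd.le le_rfl) hid).1
      (hw c (hwS c hc le_rfl hcd.le) i (hwS i hi hci.le hid.le) hci).1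
      (hv c (hvS c hc (by simp)) j (hvS j hj hj') (hcd.trans hdj)).1
      (hv d (hvS d hd (by simp)) j (hvS j hj hj') hdj).1,
      fun hijG => hG hci hid hdj hcdG hijG⟩
  · obtain ⟨hcj, hjd⟩ := not_not.1 hj'
    have hic : i < c := not_le.1 fun hci => hclosed ⟨⟨hci, (hij.trans hjd).le⟩, hcj.le, hjd.le⟩
    have hi' : ¬(c < i ∧ i < d) := fun h => lt_asymm h.1 hic
    rw [glueAlong_eq_transport hw1 hcj.le hjd.le, glueAlong_eq_outer hi']
    exact ⟨one_lt_cross_transport_right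
      (hw j (hwS j hj hcj.le hjd.le) d (hwS d hd hcd.le le_rfl) hjd).1
      (hw c (hwS c hc le_rfl hcd.le) j (hwS j hj hcj.le hjd.le) hcj).1
      (hv i (hvS i hi hi') c (hvS c hc (by simp)) hic).1
      (hv i (hvS i hi hi') d (hvS d hd (by simp)) (hic.trans hcd)).1,
      fun hijG => hG hic hcj hjd hijG hcdG⟩

end Realization

open Real

theorem sin_lt_sin_of_lt_of_lt_pi_sub {δ x : ℝ} (hδ : -(π / 2) ≤ δ) (hδx : δ < x)
    (hx : x < π - δ) : sin δ < sin x := by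
  rcases le_or_gt x (π / 2) with hx' | hx'
  · exact sin_lt_sin_of_lt_of_le_pi_div_two hδ hx' hδx
  · rw [← sin_pi_sub x]
    exact sin_lt_sin_of_lt_of_le_pi_div_two hδ (by linarith) (by linarith)

theorem one_le_sin_div_sin {δ x : ℝ} (hδ : 0 < δ) (hδx : δ ≤ x) (hx : x ≤ π - δ) :
    1 ≤ sin x / sin δ ∧ (sin x / sin δ = 1 ↔ x = δ ∨ x = π - δ) := by
  have hsin : 0 < sin δ := sin_pos_of_pos_of_lt_pi hδ (by linarith)
  rw [le_div_iff₀ hsin, one_mul, div_eq_one_iff_eq hsin.ne']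
  rcases hδx.eq_or_lt with rfl | hδx
  · simp
  rcases hx.eq_or_lt with rfl | hx
  · simp [sin_pi_sub]
  have := sin_lt_sin_of_lt_of_lt_pi_sub (by linarith) hδx hx
  exact ⟨this.le, iff_of_false this.ne' (by rintro (h | h) <;> linarith)⟩

theorem cross_halfCircle (r θ θ' : ℝ) :
    cross (r * cos θ, sin θ) (r * cos θ', sin θ') = r * sin (θ' - θ) := by
  simp only [cross, sin_sub]
  ring

section Polygon

variable {α : Type*} [LinearOrder α] (S : Finset α) (G : Set (Finset α))

open Classical in
noncomputable def gapWeight (y : α) : ℕ :=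
  if ∃ y' ∈ S, y < y' ∧ (∀ z ∈ S, ¬(y < z ∧ z < y')) ∧ {y, y'} ∈ G then 1 else 2

noncomputable def arcWeight (i j : α) : ℕ := ∑ y ∈ S with i ≤ y ∧ y < j, gapWeight S G y

variable {S G}

theorem one_le_gapWeight (y : α) : 1 ≤ gapWeight S G y := by
  unfold gapWeight; split_ifs <;> norm_num

theorem arcWeight_add {i j k : α} (hij : i ≤ j) (hjk : j ≤ k) :
    arcWeight S G i j + arcWeight S G j k = arcWeight S G i k := by
  unfold arcWeight
  rw [← Finset.sum_union (Finset.disjoint_filter.2 fun y _ h h' => (h.2.trans_le h'.1).false)]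
  congr 1
  ext y
  simp only [Finset.mem_union, Finset.mem_filter]
  grind

theorem one_le_arcWeight {i j : α} (hi : i ∈ S) (hij : i < j) : 1 ≤ arcWeight S G i j :=
  (one_le_gapWeight i).trans <| Finset.single_le_sum (fun _ _ => Nat.zero_le _)
    (Finset.mem_filter.2 ⟨hi, le_rfl, hij⟩)

theorem arcWeight_of_adjacent {i j : α} (hi : i ∈ S) (hij : i < j)
    (hadj : ∀ z ∈ S, ¬(i < z ∧ z < j)) : arcWeight S G i j = gapWeight S G i := by
  unfold arcWeight
  rw [Finset.sum_eq_single_of_mem i (Finset.mem_filter.2 ⟨hi, le_rfl, hij⟩)]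
  rintro y hy hyi
  obtain ⟨hyS, hiy, hyj⟩ := Finset.mem_filter.1 hy
  exact absurd ⟨lt_of_le_of_ne hiy (Ne.symm hyi), hyj⟩ (hadj y hyS)

theorem gapWeight_eq_one_iff_of_adjacent {i j : α} (hj : j ∈ S) (hij : i < j)
    (hadj : ∀ z ∈ S, ¬(i < z ∧ z < j)) : gapWeight S G i = 1 ↔ {i, j} ∈ G := by
  unfold gapWeight
  refine ⟨fun h => ?_, fun h => if_pos ⟨j, hj, hij, hadj, h⟩⟩
  split_ifs at h with hsucc
  · obtain ⟨k, hk, hik, hkadj, hikG⟩ := hsucc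
    obtain hkj | rfl | hjk := lt_trichotomy k j
    · exact absurd ⟨hik, hkj⟩ (hadj k hk)
    · exact hikG
    · exact absurd ⟨hij, hjk⟩ (hkadj j hj)
  · cases h

theorem arcWeight_eq_one_iff {i j : α} (hi : i ∈ S) (hj : j ∈ S) (hij : i < j) :
    arcWeight S G i j = 1 ↔ (∀ z ∈ S, ¬(i < z ∧ z < j)) ∧ {i, j} ∈ G := by
  constructor
  · intro h
    have hadj : ∀ z ∈ S, ¬(i < z ∧ z < j) := by
      rintro z hz ⟨hiz, hzj⟩
      have := arcWeight_add (S := S) (G := G) hiz.le hzj.le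
      have := one_le_arcWeight (G := G) hi hiz
      have := one_le_arcWeight (G := G) hz hzj
      omega
    rw [arcWeight_of_adjacent hi hij hadj] at h
    exact ⟨hadj, (gapWeight_eq_one_iff_of_adjacent hj hij hadj).1 h⟩
  · rintro ⟨hadj, hijG⟩
    rw [arcWeight_of_adjacent hi hij hadj]
    exact (gapWeight_eq_one_iff_of_adjacent hj hij hadj).2 hijG

theorem arcWeight_lt_arcWeight {a b i j : α} (ha : a ∈ S) (hS : ∀ z ∈ S, a ≤ z ∧ z ≤ b)
    (hi : i ∈ S) (hj : j ∈ S) (hij : i ≤ j) (hne : ¬(i = a ∧ j = b)) :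
    arcWeight S G i j < arcWeight S G a b := by
  have hai := (hS i hi).1
  have hjb := (hS j hj).2
  rw [← arcWeight_add hai (hij.trans hjb), ← arcWeight_add hij hjb]
  rcases not_and_or.1 hne with h | h
  · have := one_le_arcWeight (G := G) ha (lt_of_le_of_ne hai (Ne.symm h))
    omega
  · have := one_le_arcWeight (G := G) hj (lt_of_le_of_ne hjb h)
    omega

theorem arcWeight_add_one_le {a b i j : α} (ha : a ∈ S) (hS : ∀ z ∈ S, a ≤ z ∧ z ≤ b)
    (hi : i ∈ S) (hj : j ∈ S) (hij : i ≤ j) {w : ℕ} (hw : 1 ≤ w) :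
    arcWeight S G i j + 1 ≤ arcWeight S G a b + w ∧
      (arcWeight S G i j + 1 = arcWeight S G a b + w ↔ i = a ∧ j = b ∧ w = 1) := by
  by_cases h : i = a ∧ j = b
  · obtain ⟨rfl, rfl⟩ := h
    simp only [true_and]
    omega
  · have := arcWeight_lt_arcWeight (G := G) ha hS hi hj hij h
    refine ⟨by omega, ⟨fun _ => by omega, fun h' => absurd ⟨h'.1, h'.2.1⟩ h⟩⟩

theorem mem_iff_arcWeight_eq_one_of_chordless {a b i j : α}
    (hG : ∀ i ∈ S, ∀ j ∈ S, i < j → {i, j} ∈ G → (∃ z ∈ S, i < z ∧ z < j) → i = a ∧ j = b)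
    (hi : i ∈ S) (hj : j ∈ S) (hij : i < j) :
    {i, j} ∈ G ↔ arcWeight S G i j = 1 ∨ i = a ∧ j = b ∧ {a, b} ∈ G := by
  constructor
  · intro hijG
    by_cases hbetween : ∃ z ∈ S, i < z ∧ z < j
    · obtain ⟨rfl, rfl⟩ := hG i hi j hj hij hijG hbetween
      exact Or.inr ⟨rfl, rfl, hijG⟩
    · exact Or.inl ((arcWeight_eq_one_iff hi hj hij).2
        ⟨fun z hz h => hbetween ⟨z, hz, h⟩, hijG⟩)
  · rintro (h1 | ⟨rfl, rfl, h⟩)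
    · exact ((arcWeight_eq_one_iff hi hj hij).1 h1).2
    · exact h

/-- The points of `S` go on a half-circle, consecutive points at angular distance `δ` when
they are joined by an edge and `2 δ` otherwise; the last point lies at angle `π - δ` or `π - 2 δ`
according to whether `{a, b}` is an edge. -/
theorem exists_realizes_of_chordless {a b : α} (ha : a ∈ S) (hS : ∀ z ∈ S, a ≤ z ∧ z ≤ b)
    (hG : ∀ i ∈ S, ∀ j ∈ S, i < j → {i, j} ∈ G → (∃ z ∈ S, i < z ∧ z < j) → i = a ∧ j = b) :
    ∃ v, Realizes S G v := by
  classical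
  set close : ℕ := if {a, b} ∈ G then 1 else 2 with hclose
  have hclose1 : 1 ≤ close := by rw [hclose]; split_ifs <;> norm_num
  have hclose_eq : close = 1 ↔ {a, b} ∈ G := by rw [hclose]; split_ifs with h <;> simp [h]
  set δ : ℝ := π / (arcWeight S G a b + close) with hδ
  have hδpos : 0 < δ := by rw [hδ]; positivity
  have hδsum : δ * (arcWeight S G a b + close) = π := by rw [hδ]; field_simp
  refine ⟨fun z => ((sin δ)⁻¹ * cos (δ * arcWeight S G a z), sin (δ * arcWeight S G a z)),
    fun i hi j hj hij => ?_⟩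
  obtain ⟨hle, hfar⟩ := arcWeight_add_one_le ha hS hi hj hij.le hclose1
  have hπ : δ * arcWeight S G i j = π - δ ↔
      arcWeight S G i j + 1 = arcWeight S G a b + close := by
    rw [← hδsum, ← Nat.cast_inj (R := ℝ), Nat.cast_add, Nat.cast_add, Nat.cast_one]
    constructor
    · intro h
      exact mul_left_cancel₀ hδpos.ne' (by linarith)
    · intro h
      rw [← h]
      ring
  obtain ⟨hge, hiff⟩ := one_le_sin_div_sin (x := δ * arcWeight S G i j) hδpos
    (le_mul_of_one_le_right hδpos.le (by exact_mod_cast one_le_arcWeight hi hij))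
    (by
      have : (arcWeight S G i j : ℝ) + 1 ≤ arcWeight S G a b + close := by exact_mod_cast hle
      nlinarith)
  have harc : δ * arcWeight S G a j - δ * arcWeight S G a i = δ * arcWeight S G i j := by
    rw [← arcWeight_add (hS i hi).1 hij.le]
    push_cast
    ring
  dsimp only
  rw [cross_halfCircle, harc, ← div_eq_inv_mul]
  refine ⟨hge, hiff.trans ?_⟩
  rw [hπ, hfar, mul_eq_left₀ hδpos.ne', Nat.cast_eq_one, hclose_eq,
    mem_iff_arcWeight_eq_one_of_chordless hG hi hj hij]

end Polygon

section Induction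

variable {α : Type*} [LinearOrder α] {G : Set (Finset α)}

theorem NonCrossing.exists_realizes (hG : NonCrossing G) (S : Finset α) :
    ∃ v, Realizes S G v := by
  induction S using Finset.strongInduction with
  | H S ih =>
  by_cases hchord : ∃ c ∈ S, ∃ d ∈ S, c < d ∧ {c, d} ∈ G ∧ (∃ z ∈ S, c < z ∧ z < d) ∧
      ∃ z ∈ S, z < c ∨ d < z
  · obtain ⟨c, hc, d, hd, hcd, hcdG, ⟨z, hz, hcz, hzd⟩, z', hz', hz'out⟩ := hchord
    obtain ⟨v, hv⟩ := ih (S.filter fun z => ¬(c < z ∧ z < d))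
      (Finset.filter_ssubset.2 ⟨z, hz, not_not.2 ⟨hcz, hzd⟩⟩)
    obtain ⟨w, hw⟩ := ih (S.filter fun z => c ≤ z ∧ z ≤ d)
      (Finset.filter_ssubset.2 ⟨z', hz', fun h => hz'out.elim h.1.not_gt h.2.not_gt⟩)
    exact ⟨_, realizes_glueAlong hG hc hd hcd hcdG hv hw⟩
  rcases S.eq_empty_or_nonempty with rfl | hne
  · exact ⟨0, by simp [Realizes]⟩
  refine exists_realizes_of_chordless (b := S.max' hne) (S.min'_mem hne)
    (fun z hz => ⟨S.min'_le z hz, S.le_max' z hz⟩) fun i hi j hj hij hijG hbetween => ?_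
  have hspan : ∀ z ∈ S, i ≤ z ∧ z ≤ j := fun z hz => by
    by_contra h
    exact hchord ⟨i, hi, j, hj, hij, hijG, hbetween, z, hz, by
      rcases le_or_gt i z with hiz | hzi
      · exact Or.inr (not_le.1 fun hzj => h ⟨hiz, hzj⟩)
      · exact Or.inl hzi⟩
  exact ⟨le_antisymm (hspan _ (S.min'_mem hne)).1 (S.min'_le i hi),
    le_antisymm (S.le_max' j hj) (hspan _ (S.max'_mem hne)).2⟩

end Induction

theorem minorOn_two_pair {n : ℕ} (A : Matrix (Fin 2) (Fin n) ℝ) {i j : Fin n} (hij : i < j) :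
    minorOn 2 n A {i, j} = cross (A 0 i, A 1 i) (A 0 j, A 1 j) := by
  have hcard : ({i, j} : Finset (Fin n)).card = 2 := Finset.card_pair hij.ne
  have h0 : ({i, j} : Finset (Fin n)).orderEmbOfFin hcard 0 = i := by
    rw [show (0 : Fin 2) = ⟨0, two_pos⟩ from rfl, Finset.orderEmbOfFin_zero]
    simp [hij.le]
  have h1 : ({i, j} : Finset (Fin n)).orderEmbOfFin hcard 1 = j := by
    rw [show (1 : Fin 2) = ⟨2 - 1, by norm_num⟩ from rfl, Finset.orderEmbOfFin_last _ two_pos]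
    simp [hij.le]
  rw [minorOn, dif_pos hcard, Matrix.det_fin_two]
  simp only [Matrix.submatrix_apply, id_eq, h0, h1, cross]
  ring

theorem exists_lt_and_eq_pair {α : Type*} [LinearOrder α] {K : Finset α} (hK : K.card = 2) :
    ∃ i j, i < j ∧ K = {i, j} := by
  obtain ⟨x, y, hxy, rfl⟩ := Finset.card_eq_two.1 hK
  rcases hxy.lt_or_gt with h | h
  · exact ⟨x, y, h, rfl⟩
  · exact ⟨y, x, h, Finset.pair_comm x y⟩

theorem false_of_interleaved_minimal {α : Type*} [LinearOrder α] {v : α → ℝ × ℝ} {m : ℝ}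
    (hm : 0 < m) (hge : ∀ i j, i < j → m ≤ cross (v i) (v j)) {p q r s : α} (hpq : p < q)
    (hqr : q < r) (hrs : r < s) (hpr : cross (v p) (v r) = m) (hqs : cross (v q) (v s) = m) :
    False := by
  have hpluecker := cross_mul_cross (v p) (v q) (v r) (v s)
  rw [hpr, hqs] at hpluecker
  nlinarith [mul_le_mul (hge p q hpq) (hge r s hrs) hm.le (hm.trans_le (hge p q hpq)).le,
    mul_le_mul (hge p s (hpq.trans (hqr.trans hrs))) (hge q r hqr) hm.le
      (hm.trans_le (hge p s (hpq.trans (hqr.trans hrs)))).le]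

theorem IsArrSmallest.not_crossing {n : ℕ} {G : Finset (Finset (Fin n))}
    (h : IsArrSmallest 2 n G) {e f : Finset (Fin n)} (he : e ∈ G) (hf : f ∈ G) :
    ¬Crossing e f := by
  obtain ⟨-, hcard, A, hpos, heq, hmin⟩ := h
  have hge : ∀ i j : Fin n, i < j →
      minorOn 2 n A e ≤ cross (A 0 i, A 1 i) (A 0 j, A 1 j) := fun i j hij => by
    rw [← minorOn_two_pair A hij]
    by_cases hijG : {i, j} ∈ G
    · exact (heq e he _ hijG).le
    · exact (hmin _ (Finset.card_pair hij.ne) hijG e he).le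
  have hm : 0 < minorOn 2 n A e := hpos e (hcard e he)
  rintro ⟨a, b, c, d, hab, hcd, rfl, rfl, ⟨hac, hcb, hbd⟩ | ⟨hca, had, hdb⟩⟩
  · exact false_of_interleaved_minimal hm hge hac hcb hbd (minorOn_two_pair A hab).symm
      (by rw [← minorOn_two_pair A hcd, heq _ hf _ he])
  · exact false_of_interleaved_minimal hm hge hca had hdb
      (by rw [← minorOn_two_pair A hcd, heq _ hf _ he]) (minorOn_two_pair A hab).symm

theorem nonCrossing_of_forall_not_crossing {n : ℕ} {G : Finset (Finset (Fin n))}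
    (hG : ∀ e ∈ G, ∀ f ∈ G, (e ∩ f).Nonempty ∨ ¬Crossing e f) :
    NonCrossing (G : Set (Finset (Fin n))) := by
  intro a b c d hac hcb hbd hab hcd
  rcases hG _ hab _ hcd with ⟨x, hx⟩ | hnc
  · simp only [Finset.mem_inter, Finset.mem_insert, Finset.mem_singleton] at hx
    obtain ⟨rfl | rfl, rfl | rfl⟩ := hx
    all_goals order
  · exact hnc ⟨a, b, c, d, hac.trans hcb, hcb.trans hbd, rfl, rfl, Or.inl ⟨hac, hcb, hbd⟩⟩

theorem isArrSmallest_of_realizes {n : ℕ} {G : Finset (Finset (Fin n))} (hGne : G.Nonempty)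
    (hG2 : ∀ e ∈ G, e.card = 2) {v : Fin n → ℝ × ℝ} (hv : Realizes Finset.univ (G : Set _) v) :
    IsArrSmallest 2 n G := by
  set A : Matrix (Fin 2) (Fin n) ℝ := Matrix.of ![fun j => (v j).1, fun j => (v j).2]
  have hA : ∀ K : Finset (Fin n), K.card = 2 →
      1 ≤ minorOn 2 n A K ∧ (minorOn 2 n A K = 1 ↔ K ∈ G) := by
    intro K hK
    obtain ⟨i, j, hij, rfl⟩ := exists_lt_and_eq_pair hK
    rw [minorOn_two_pair A hij]
    exact hv i (Finset.mem_univ i) j (Finset.mem_univ j) hij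
  have hG1 : ∀ I ∈ G, minorOn 2 n A I = 1 := fun I hI => (hA I (hG2 I hI)).2.2 hI
  refine ⟨hGne, hG2, A, fun I hI => one_pos.trans_le (hA I hI).1,
    fun I hI J hJ => by rw [hG1 I hI, hG1 J hJ], fun K hK hKG I hI => ?_⟩
  rw [hG1 I hI]
  exact lt_of_le_of_ne (hA K hK).1 fun h => hKG ((hA K hK).2.1 h.symm)

theorem smallest_arrangements_Gr2n_general (n : ℕ)
    (G : Finset (Finset (Fin n))) (hGne : G.Nonempty) (hG2 : ∀ e ∈ G, e.card = 2) :
    IsArrSmallest 2 n G ↔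
      ∀ e ∈ G, ∀ f ∈ G, (e ∩ f).Nonempty ∨ ¬ Crossing e f := by
  refine ⟨fun h e he f hf => Or.inr (h.not_crossing he hf), fun h => ?_⟩
  obtain ⟨v, hv⟩ := (nonCrossing_of_forall_not_crossing h).exists_realizes Finset.univ
  exact isArrSmallest_of_realizes hGne hG2 hv

theorem smallest_arrangements_Gr2n (n : ℕ) (hn : 3 ≤ n)
    (G : Finset (Finset (Fin n))) (hGne : G.Nonempty) (hG2 : ∀ e ∈ G, e.card = 2) :
    IsArrSmallest 2 n G ↔
      ∀ e ∈ G, ∀ f ∈ G, (e ∩ f).Nonempty ∨ ¬ Crossing e f :=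
  smallest_arrangements_Gr2n_general n G hGne hG2

end Stmt0
end

section
/- Let 0 < k < n, let S be a maximal sorted collection of k-element subsets of {1,…,n}, and let J be a k-element subset of {1,…,n}. Then J ∈ S if and only if no hyperplane H_{i,j,r} = {x ∈ ℝⁿ : x_i + x_{i+1} + ⋯ + x_j = r}, for 1 ≤ i ≤ j ≤ n and r ∈ ℤ, separates the polytope P_S from the point e_J, i.e., if and only if for all such (i,j,r) it is not the case that P_S lies in one closed halfspace determined by H_{i,j,r} while e_J lies in the complementary open halfspace. -/
/-!
Let `c_I [i, j] = #(I ∩ [i, j])` (`countIn I (Set.Icc i j)`), the value at `e_I` of the linear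
form defining `H_{i,j,r}`. For `A = I ∖ J` and `B = J ∖ I`, the imbalance `#(A ∩ L) - #(B ∩ L)`
over initial segments `L` stays in `{0, 1}` (or in `{-1, 0}`) exactly when `A` and `B` interlace.
An interval is a difference of two initial segments, and two nested initial segments differ, on
`A ∪ B`, by an interval; so two sets of equal size are sorted iff their interval counts differ by
at most one.

Halfspaces are convex, so `H_{i,j,r}` separates `P_S` from `e_J` iff it separates the vertices
`e_I`, `I ∈ S`, from `e_J`. The counts `c_I [i, j]`, `I ∈ S`, lie within one of each other, so an
integer `r` separating them from `c_J [i, j]` exists as soon as `c_J [i, j]` is two away from one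
of them. Hence if nothing separates, `J` is sorted with every member of `S`, and maximality puts
`J` in `S`.
-/
namespace Stmt12

/-- `S` and `T` interlace: `s₁ < t₁ < s₂ < t₂ < ⋯ < s_r < t_r`. -/
def Interlaced {α : Type*} [LinearOrder α] (S T : Finset α) : Prop :=
  ∃ (r : ℕ) (hS : S.card = r) (hT : T.card = r),
    (∀ i : Fin r, S.orderEmbOfFin hS i < T.orderEmbOfFin hT i) ∧
    (∀ i j : Fin r, (i : ℕ) + 1 = (j : ℕ) → T.orderEmbOfFin hT i < S.orderEmbOfFin hS j)

/-- Two sets `I`, `J` are sorted if `I∖J` and `J∖I` interlace. -/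
def SortedPair {α : Type*} [LinearOrder α] (I J : Finset α) : Prop :=
  Interlaced (I \ J) (J \ I) ∨ Interlaced (J \ I) (I \ J)

/-- A sorted collection of `k`-element subsets of `{1,…,n}`. -/
def SortedColl (k n : ℕ) (S : Finset (Finset (Fin n))) : Prop :=
  (∀ I ∈ S, I.card = k) ∧ ∀ I ∈ S, ∀ J ∈ S, SortedPair I J

/-- A maximal (by containment) sorted collection. -/
def MaxSortedColl (k n : ℕ) (S : Finset (Finset (Fin n))) : Prop :=
  SortedColl k n S ∧ ∀ T : Finset (Finset (Fin n)), SortedColl k n T → S ⊆ T → S = T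

/-- The 0-1 indicator vector `e_I ∈ ℝⁿ` of a subset `I` of `{1,…,n}`. -/
def indic (n : ℕ) (I : Finset (Fin n)) : Fin n → ℝ :=
  fun i => if i ∈ I then 1 else 0

/-- The polytope `P_S`: the convex hull of the indicator vectors of members of `S`. -/
def polytope (n : ℕ) (S : Finset (Finset (Fin n))) : Set (Fin n → ℝ) :=
  convexHull ℝ (indic n '' (↑S : Set (Finset (Fin n))))

/-- The hyperplane `H_{i,j,r} = {x : x_i + x_{i+1} + ⋯ + x_j = r}` separates `P_S`
from the point `e_J`: `P_S` lies in one closed halfspace while `e_J` lies strictly in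
the complementary open halfspace. -/
def Separates (n : ℕ) (S : Finset (Finset (Fin n))) (J : Finset (Fin n))
    (i j : Fin n) (r : ℤ) : Prop :=
  ((∀ x ∈ polytope n S, ∑ t ∈ Finset.Icc i j, x t ≤ (r : ℝ)) ∧
      (r : ℝ) < ∑ t ∈ Finset.Icc i j, indic n J t) ∨
  ((∀ x ∈ polytope n S, (r : ℝ) ≤ ∑ t ∈ Finset.Icc i j, x t) ∧
      ∑ t ∈ Finset.Icc i j, indic n J t < (r : ℝ))

open Finset

section

variable {α : Type*}

open scoped Classical in
noncomputable def countIn (A : Finset α) (s : Set α) : ℕ := #{t ∈ A | t ∈ s}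

noncomputable def imbalance (A B : Finset α) (s : Set α) : ℤ := countIn A s - countIn B s

lemma countIn_le_card (A : Finset α) (s : Set α) : countIn A s ≤ #A := by
  classical
  exact card_filter_le _ _

lemma countIn_congr {A : Finset α} {s u : Set α} (h : ∀ t ∈ A, t ∈ s ↔ t ∈ u) :
    countIn A s = countIn A u := by
  classical
  unfold countIn
  rw [filter_congr h]

lemma countIn_sdiff_add_countIn {A : Finset α} {s u : Set α} (hsu : s ⊆ u) :
    countIn A (u \ s) + countIn A s = countIn A u := by
  classical
  have := card_filter_add_card_filter_not (s := {t ∈ A | t ∈ u}) (· ∈ s)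
  unfold countIn
  rw [add_comm]
  convert this using 3 <;> ext t
  · simpa using fun h _ => hsu h
  · simp only [mem_filter, Set.mem_sdiff]
    tauto

lemma countIn_sdiff_add_countIn_inter [DecidableEq α] (I J : Finset α) (s : Set α) :
    countIn (I \ J) s + countIn (I ∩ J) s = countIn I s := by
  classical
  unfold countIn
  convert card_sdiff_add_card_inter {t ∈ I | t ∈ s} J using 3 <;> ext t <;> simp [and_right_comm]

lemma imbalance_comm (A B : Finset α) (s : Set α) : imbalance B A s = -imbalance A B s := by
  unfold imbalance
  ring

lemma imbalance_empty (A B : Finset α) : imbalance A B ∅ = 0 := by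
  simp [imbalance, countIn]

lemma imbalance_congr [DecidableEq α] {A B : Finset α} {s u : Set α}
    (h : ∀ t ∈ A ∪ B, t ∈ s ↔ t ∈ u) : imbalance A B s = imbalance A B u := by
  unfold imbalance
  rw [countIn_congr fun t ht => h t (mem_union_left B ht),
    countIn_congr fun t ht => h t (mem_union_right A ht)]

lemma imbalance_sdiff_of_subset {A B : Finset α} {s u : Set α} (hsu : s ⊆ u) :
    imbalance A B (u \ s) = imbalance A B u - imbalance A B s := by
  have hA := countIn_sdiff_add_countIn (A := A) hsu
  have hB := countIn_sdiff_add_countIn (A := B) hsu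
  unfold imbalance
  omega

lemma imbalance_sdiff_sdiff [DecidableEq α] (I J : Finset α) (s : Set α) :
    imbalance (I \ J) (J \ I) s = imbalance I J s := by
  have hI := countIn_sdiff_add_countIn_inter I J s
  have hJ := countIn_sdiff_add_countIn_inter J I s
  rw [inter_comm] at hJ
  unfold imbalance
  omega

variable [LinearOrder α]

lemma card_filter_orderEmbOfFin {A : Finset α} {r : ℕ} (h : #A = r) (p : α → Prop)
    [DecidablePred p] : #{t ∈ A | p t} = #{i : Fin r | p (A.orderEmbOfFin h i)} := by
  conv_lhs => rw [← A.map_orderEmbOfFin_univ h]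
  rw [filter_map, card_map]
  rfl

lemma orderEmbOfFin_mem_iff_lt_countIn {A : Finset α} {r : ℕ} (h : #A = r) {s : Set α}
    (hs : IsLowerSet s) (i : Fin r) : A.orderEmbOfFin h i ∈ s ↔ (i : ℕ) < countIn A s := by
  classical
  rw [countIn, card_filter_orderEmbOfFin h]
  constructor
  · intro hi
    have hsub : Iic i ⊆ ({j | A.orderEmbOfFin h j ∈ s} : Finset (Fin r)) := fun j hj =>
      mem_filter.2 ⟨mem_univ j, hs ((A.orderEmbOfFin h).monotone (mem_Iic.1 hj)) hi⟩
    have := card_le_card hsub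
    rw [Fin.card_Iic] at this
    omega
  · intro hi
    by_contra hni
    have hsub : ({j | A.orderEmbOfFin h j ∈ s} : Finset (Fin r)) ⊆ Iio i := fun j hj =>
      mem_Iio.2 <| lt_of_not_ge fun hij =>
        hni (hs ((A.orderEmbOfFin h).monotone hij) (mem_filter.1 hj).2)
    have := card_le_card hsub
    rw [Fin.card_Iio] at this
    omega

lemma Interlaced.imbalance_mem {A B : Finset α} (h : Interlaced A B) {s : Set α}
    (hs : IsLowerSet s) : 0 ≤ imbalance A B s ∧ imbalance A B s ≤ 1 := by
  obtain ⟨r, hA, hB, hab, hba⟩ := h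
  have hmA := hA ▸ countIn_le_card A s
  have hmB := hB ▸ countIn_le_card B s
  have hBA : countIn B s ≤ countIn A s := by
    by_contra! hlt
    have hi : countIn B s - 1 < r := by omega
    have hbi := (orderEmbOfFin_mem_iff_lt_countIn hB hs ⟨_, hi⟩).2 (by simp only; omega)
    have := (orderEmbOfFin_mem_iff_lt_countIn hA hs ⟨_, hi⟩).1 (hs (hab _).le hbi)
    simp only at this
    omega
  have hAB : countIn A s ≤ countIn B s + 1 := by
    by_contra! hlt
    have hj : countIn B s + 1 < r := by omega
    have haj := (orderEmbOfFin_mem_iff_lt_countIn hA hs ⟨_, hj⟩).2 hlt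
    have := (orderEmbOfFin_mem_iff_lt_countIn hB hs ⟨countIn B s, by omega⟩).1
      (hs (hba _ ⟨_, hj⟩ rfl).le haj)
    simp only [lt_self_iff_false] at this
  unfold imbalance
  omega

lemma interlaced_of_imbalance_Iic {A B : Finset α} (hd : Disjoint A B) (hc : #A = #B)
    (h : ∀ x, 0 ≤ imbalance A B (Set.Iic x) ∧ imbalance A B (Set.Iic x) ≤ 1) :
    Interlaced A B := by
  have hcount (x : α) : countIn B (Set.Iic x) ≤ countIn A (Set.Iic x) ∧
      countIn A (Set.Iic x) ≤ countIn B (Set.Iic x) + 1 := by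
    have := h x
    unfold imbalance at this
    omega
  set a := A.orderEmbOfFin rfl
  set b := B.orderEmbOfFin hc.symm
  have hne (i j : Fin #A) : a i ≠ b j :=
    fun he => disjoint_left.1 hd (orderEmbOfFin_mem A rfl i) (he ▸ orderEmbOfFin_mem B _ j)
  refine ⟨#A, rfl, hc.symm, fun i => (lt_of_le_of_ne ?_ (hne i i)), fun i j hij => ?_⟩
  · have hb := (orderEmbOfFin_mem_iff_lt_countIn hc.symm (isLowerSet_Iic (b i)) i).1 le_rfl
    exact (orderEmbOfFin_mem_iff_lt_countIn rfl (isLowerSet_Iic (b i)) i).2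
      (hb.trans_le (hcount (b i)).1)
  · refine lt_of_le_of_ne ?_ (hne j i).symm
    have ha := (orderEmbOfFin_mem_iff_lt_countIn rfl (isLowerSet_Iic (a j)) j).1 le_rfl
    exact (orderEmbOfFin_mem_iff_lt_countIn hc.symm (isLowerSet_Iic (a j)) i).2
      (by have := (hcount (a j)).2; omega)

lemma SortedPair.symm {I J : Finset α} (h : SortedPair I J) : SortedPair J I := Or.symm h

lemma sortedPair_self (I : Finset α) : SortedPair I I :=
  .inl ⟨0, by simp, by simp, fun i => i.elim0, fun i => i.elim0⟩

lemma SortedPair.abs_imbalance_Icc_le_one {I J : Finset α} (h : SortedPair I J) {i j : α}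
    (hij : i ≤ j) : |imbalance I J (Set.Icc i j)| ≤ 1 := by
  have hIcc : Set.Icc i j = Set.Iic j \ Set.Iio i := by
    ext t
    simp
  have key {A B : Finset α} (hAB : Interlaced A B) : |imbalance A B (Set.Icc i j)| ≤ 1 := by
    rw [hIcc, imbalance_sdiff_of_subset (Set.Iio_subset_Iic hij)]
    have := hAB.imbalance_mem (isLowerSet_Iic j)
    have := hAB.imbalance_mem (isLowerSet_Iio i)
    rw [abs_le]
    omega
  rcases h with h | h
  · rw [← imbalance_sdiff_sdiff]
    exact key h
  · rw [← imbalance_sdiff_sdiff, ← abs_neg, ← imbalance_comm]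
    exact key h

lemma abs_imbalance_le_one_of_ordConnected {A B : Finset α}
    (h : ∀ i j, i ≤ j → |imbalance A B (Set.Icc i j)| ≤ 1) {u : Set α} (hu : u.OrdConnected) :
    |imbalance A B u| ≤ 1 := by
  classical
  set C : Finset α := {t ∈ A ∪ B | t ∈ u}
  obtain hC | hC := C.eq_empty_or_nonempty
  · have hnone (t : α) (ht : t ∈ A ∪ B) : t ∈ u ↔ t ∈ (∅ : Set α) :=
      iff_false_intro fun htu => eq_empty_iff_forall_notMem.1 hC t (mem_filter.2 ⟨ht, htu⟩)
    rw [imbalance_congr hnone, imbalance_empty, abs_zero]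
    exact zero_le_one
  · have hmem (t : α) (ht : t ∈ A ∪ B) : t ∈ u ↔ t ∈ Set.Icc (C.min' hC) (C.max' hC) :=
      ⟨fun htu => ⟨C.min'_le t (mem_filter.2 ⟨ht, htu⟩), C.le_max' t (mem_filter.2 ⟨ht, htu⟩)⟩,
        fun hti => hu.out (mem_filter.1 (C.min'_mem hC)).2 (mem_filter.1 (C.max'_mem hC)).2 hti⟩
    rw [imbalance_congr hmem]
    exact h _ _ (C.min'_le_max' hC)

lemma sortedPair_of_abs_imbalance_Icc_le_one {I J : Finset α} (hc : #I = #J)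
    (h : ∀ i j, i ≤ j → |imbalance I J (Set.Icc i j)| ≤ 1) : SortedPair I J := by
  simp only [← imbalance_sdiff_sdiff I J] at h
  have hbound (x : α) : |imbalance (I \ J) (J \ I) (Set.Iic x)| ≤ 1 :=
    abs_imbalance_le_one_of_ordConnected h Set.ordConnected_Iic
  have hstep {x y : α} (hxy : x ≤ y) :
      |imbalance (I \ J) (J \ I) (Set.Iic y) - imbalance (I \ J) (J \ I) (Set.Iic x)| ≤ 1 := by
    rw [← imbalance_sdiff_of_subset (Set.Iic_subset_Iic.2 hxy)]
    exact abs_imbalance_le_one_of_ordConnected h (Set.ordConnected_Iic.inter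
      (isLowerSet_Iic x).compl.ordConnected)
  by_cases hneg : ∃ x, imbalance (I \ J) (J \ I) (Set.Iic x) < 0
  · obtain ⟨x, hx⟩ := hneg
    refine .inr (interlaced_of_imbalance_Iic disjoint_sdiff_sdiff.symm (card_sdiff_comm hc).symm
      fun y => ?_)
    have := abs_le.1 (hbound y)
    rw [imbalance_comm]
    rcases le_total x y with hxy | hxy <;> have := abs_le.1 (hstep hxy) <;> omega
  · push Not at hneg
    exact .inl (interlaced_of_imbalance_Iic disjoint_sdiff_sdiff (card_sdiff_comm hc)
      fun y => ⟨hneg y, (abs_le.1 (hbound y)).2⟩)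

end

variable {n : ℕ}

lemma sum_Icc_indic (I : Finset (Fin n)) (i j : Fin n) :
    ∑ t ∈ Icc i j, indic n I t = countIn I (Set.Icc i j) := by
  classical
  simp only [indic]
  rw [sum_boole, countIn, filter_mem_eq_inter, inter_comm]
  congr 2
  ext t
  simp

lemma forall_mem_polytope_iff {S : Finset (Finset (Fin n))} {P : (Fin n → ℝ) → Prop}
    (hP : Convex ℝ {x | P x}) : (∀ x ∈ polytope n S, P x) ↔ ∀ I ∈ S, P (indic n I) := by
  change polytope n S ⊆ {x | P x} ↔ _
  rw [polytope, hP.convexHull_subset_iff, Set.image_subset_iff]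
  rfl

lemma separates_iff {S : Finset (Finset (Fin n))} {J : Finset (Fin n)} {i j : Fin n} {r : ℤ} :
    Separates n S J i j r ↔
      ((∀ I ∈ S, countIn I (Set.Icc i j) ≤ r) ∧ r < countIn J (Set.Icc i j)) ∨
      ((∀ I ∈ S, r ≤ countIn I (Set.Icc i j)) ∧ countIn J (Set.Icc i j) < r) := by
  have hlin : IsLinearMap ℝ fun x : Fin n → ℝ => ∑ t ∈ Icc i j, x t :=
    ⟨fun x y => sum_add_distrib, fun c x => (mul_sum _ _ _).symm⟩
  rw [Separates, forall_mem_polytope_iff (convex_halfSpace_le hlin _),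
    forall_mem_polytope_iff (convex_halfSpace_ge hlin _)]
  simp only [sum_Icc_indic]
  norm_cast

lemma abs_imbalance_le_one_of_forall_not_separates {k : ℕ} {S : Finset (Finset (Fin n))}
    (hS : SortedColl k n S) {I J : Finset (Fin n)} (hI : I ∈ S) {i j : Fin n} (hij : i ≤ j)
    (h : ∀ r, ¬ Separates n S J i j r) : |imbalance J I (Set.Icc i j)| ≤ 1 := by
  have hnear (I' : Finset (Fin n)) (hI' : I' ∈ S) :
      |imbalance I I' (Set.Icc i j)| ≤ 1 := (hS.2 I hI I' hI').abs_imbalance_Icc_le_one hij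
  simp only [imbalance, abs_le] at hnear ⊢
  constructor
  · by_contra! hlt
    refine h (countIn J (Set.Icc i j) + 1) (separates_iff.2 (.inr ⟨fun I' hI' => ?_, by omega⟩))
    have := hnear I' hI'
    omega
  · by_contra! hlt
    refine h (countIn J (Set.Icc i j) - 1) (separates_iff.2 (.inl ⟨fun I' hI' => ?_, by omega⟩))
    have := hnear I' hI'
    omega

lemma MaxSortedColl.mem_of_forall_sortedPair {k : ℕ} {S : Finset (Finset (Fin n))}
    (hS : MaxSortedColl k n S) {J : Finset (Fin n)} (hJ : #J = k)
    (h : ∀ I ∈ S, SortedPair J I) : J ∈ S := by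
  have hsorted : SortedColl k n (insert J S) := by
    refine ⟨forall_mem_insert _ _ _ |>.2 ⟨hJ, hS.1.1⟩, fun I₁ h₁ I₂ h₂ => ?_⟩
    rw [mem_insert] at h₁ h₂
    rcases h₁ with rfl | h₁ <;> rcases h₂ with rfl | h₂
    · exact sortedPair_self _
    · exact h _ h₂
    · exact (h _ h₁).symm
    · exact hS.1.2 _ h₁ _ h₂
  rw [hS.2 _ hsorted (subset_insert J S)]
  exact mem_insert_self J S

theorem mem_maximal_sorted_iff_not_separated_general (k n : ℕ)
    (S : Finset (Finset (Fin n))) (hS : MaxSortedColl k n S)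
    (J : Finset (Fin n)) (hJ : J.card = k) :
    J ∈ S ↔ ∀ (i j : Fin n), i ≤ j → ∀ r : ℤ, ¬ Separates n S J i j r := by
  refine ⟨fun hJS i j _ r hsep => ?_, fun h => hS.mem_of_forall_sortedPair hJ fun I hI => ?_⟩
  · rcases separates_iff.1 hsep with ⟨hle, hlt⟩ | ⟨hle, hlt⟩ <;> exact (hle J hJS).not_gt hlt
  · exact sortedPair_of_abs_imbalance_Icc_le_one (hJ.trans (hS.1.1 I hI).symm) fun i j hij =>
      abs_imbalance_le_one_of_forall_not_separates hS.1 hI hij (h i j hij)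

theorem mem_maximal_sorted_iff_not_separated (k n : ℕ) (hk : 0 < k) (hkn : k < n)
    (S : Finset (Finset (Fin n))) (hS : MaxSortedColl k n S)
    (J : Finset (Fin n)) (hJ : J.card = k) :
    J ∈ S ↔ ∀ (i j : Fin n), i ≤ j → ∀ r : ℤ, ¬ Separates n S J i j r :=
  mem_maximal_sorted_iff_not_separated_general k n S hS J hJ

end Stmt12
end

section
/- Let k, m ≥ 1. Every maximal (by containment) arrangement of largest entries of a totally positive k×m matrix contains exactly k + m − 1 entries; the maximal arrangements of largest entries are exactly the vertex sets of monotone lattice paths from position (1,1) to position (k,m), and the number of maximal arrangements of largest entries equals binom(k+m−2, k−1). -/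
/-!
Total positivity forces every arrangement of largest entries to be a chain for the product order:
two incomparable positions carrying the maximum `v` would span a `2 × 2` minor `a b - v² ≤ 0`.
Conversely every maximal chain is an arrangement. If the chain passes from row `s` to row `s + 1`
in column `c s`, then
`exp (-∑_{s < i} (c s - j)⁺ - ∑_{i ≤ s < k - 1} (j - c s)⁺)`
equals `1` exactly on the chain and is less than `1` elsewhere, and it is a rescaling of rows and
columns of the kernel `exp (i j)`. That kernel is totally positive: its minors are generalized
Vandermonde determinants, nonzero by a Rolle argument and positive by deformation into ordinary
Vandermonde determinants. So the maximal arrangements are the maximal chains, i.e. the monotone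
lattice paths, which meet every antidiagonal once and are determined by which `k - 1` of their
`k + m - 2` steps go down.
-/

namespace Stmt16

/-- A totally positive matrix: all its minors of all sizes are positive. -/
def TotallyPositive (k m : ℕ) (A : Matrix (Fin k) (Fin m) ℝ) : Prop :=
  ∀ (r : ℕ) (f : Fin r → Fin k) (g : Fin r → Fin m),
    StrictMono f → StrictMono g → 0 < (A.submatrix f g).det

/-- An arrangement of largest entries of a totally positive `k×m` matrix.
Positions are 0-based. -/
def IsArrLargestEntries (k m : ℕ) (E : Finset (Fin k × Fin m)) : Prop :=
  ∃ (A : Matrix (Fin k) (Fin m) ℝ) (v : ℝ), TotallyPositive k m A ∧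
    (∀ p ∈ E, A p.1 p.2 = v) ∧ ∀ p : Fin k × Fin m, p ∉ E → A p.1 p.2 < v

/-- A maximal (by containment) arrangement of largest entries. -/
def MaxArrLargestEntries (k m : ℕ) (E : Finset (Fin k × Fin m)) : Prop :=
  IsArrLargestEntries k m E ∧
    ∀ E' : Finset (Fin k × Fin m), IsArrLargestEntries k m E' → E ⊆ E' → E = E'

/-- A step of a monotone lattice path: one coordinate increases by `1`. -/
def LatticeStep {k m : ℕ} (p q : Fin k × Fin m) : Prop :=
  ((q.1 : ℕ) = (p.1 : ℕ) + 1 ∧ q.2 = p.2) ∨ (q.1 = p.1 ∧ (q.2 : ℕ) = (p.2 : ℕ) + 1)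

/-- `E` is the vertex set of a monotone lattice path from position `(1,1)` to `(k,m)`
(in 0-based coordinates, from `(0,0)` to `(k−1,m−1)`). -/
def IsLatticePathSet (k m : ℕ) (E : Finset (Fin k × Fin m)) : Prop :=
  ∃ l : List (Fin k × Fin m), l.Chain' LatticeStep ∧
    (∃ p, l.head? = some p ∧ (p.1 : ℕ) = 0 ∧ (p.2 : ℕ) = 0) ∧
    (∃ q, l.getLast? = some q ∧ (q.1 : ℕ) = k - 1 ∧ (q.2 : ℕ) = m - 1) ∧
    E = l.toFinset

open Finset Real

theorem eq_zero_of_forall_sum_mul_exp_eq_zero {r : ℕ} {ε y : Fin r → ℝ} (hε : StrictMono ε)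
    (hy : StrictMono y) {c : Fin r → ℝ} (h : ∀ a, ∑ b, c b * exp (ε b * y a) = 0) : c = 0 := by
  induction r with
  | zero => exact funext fun b => b.elim0
  | succ r ih =>
    -- After multiplying by `exp (-ε 0 * x)`, the derivative no longer sees the term `b = 0`, and
    -- by Rolle it vanishes between any two consecutive points `y a`.
    set g : ℝ → ℝ := fun x => ∑ b, c b * exp ((ε b - ε 0) * x)
    set g' : ℝ → ℝ := fun x => ∑ b, c b * (ε b - ε 0) * exp ((ε b - ε 0) * x)
    have hg' : ∀ x, HasDerivAt g (g' x) x := fun x => by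
      have := HasDerivAt.fun_sum (u := univ) fun b _ =>
        (((hasDerivAt_id' x).const_mul (ε b - ε 0)).exp).const_mul (c b)
      refine this.congr_deriv (sum_congr rfl fun b _ => ?_)
      ring
    have hg : ∀ a, g (y a) = 0 := fun a => by
      have : g (y a) = (∑ b, c b * exp (ε b * y a)) * exp (-(ε 0 * y a)) := by
        simp only [g, sum_mul, mul_assoc, ← exp_add]
        exact sum_congr rfl fun b _ => by ring_nf
      rw [this, h a, zero_mul]
    have hrolle : ∀ a : Fin r, ∃ z ∈ Set.Ioo (y a.castSucc) (y a.succ), g' z = 0 := fun a =>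
      exists_hasDerivAt_eq_zero (hy a.castSucc_lt_succ) (continuous_iff_continuousAt.2
        fun x => (hg' x).continuousAt).continuousOn (by rw [hg, hg]) fun x _ => hg' x
    choose z hz hg'z using hrolle
    have hz_mono : StrictMono z := fun a a' haa' =>
      (hz a).2.trans <| (hy.monotone (Fin.succ_le_castSucc_iff.2 haa')).trans_lt (hz a').1
    have hc_succ : ∀ b : Fin r, c b.succ = 0 := by
      have hε' : StrictMono fun b : Fin r => ε b.succ - ε 0 := fun b b' hb => by
        simpa using hε (Fin.succ_lt_succ_iff.2 hb)
      have := congrFun (ih hε' hz_mono (c := fun b => c b.succ * (ε b.succ - ε 0)) fun a => by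
        simpa [g', Fin.sum_univ_succ] using hg'z a)
      intro b
      simpa [(sub_pos.2 (hε b.succ_pos)).ne'] using this b
    have hc0 : c 0 = 0 := by
      simpa [Fin.sum_univ_succ, hc_succ, (exp_pos _).ne'] using h 0
    funext b
    cases b using Fin.cases with
    | zero => exact hc0
    | succ b => exact hc_succ b

theorem det_exp_mul_ne_zero {r : ℕ} {ξ ε : Fin r → ℝ} (hξ : StrictMono ξ) (hε : StrictMono ε) :
    (Matrix.of fun a b => exp (ξ a * ε b)).det ≠ 0 := by
  intro hdet
  obtain ⟨c, hc0, hc⟩ := Matrix.exists_mulVec_eq_zero_iff.2 hdet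
  refine hc0 (eq_zero_of_forall_sum_mul_exp_eq_zero hε hξ fun a => ?_)
  simpa [Matrix.mulVec, dotProduct, mul_comm] using congrFun hc a

theorem det_exp_mul_pos {r : ℕ} {ξ ε : Fin r → ℝ} (hξ : StrictMono ξ) (hε : StrictMono ε) :
    0 < (Matrix.of fun a b => exp (ξ a * ε b)).det := by
  -- Deform `ε` linearly into `0, 1, …, r - 1`, where the determinant is a Vandermonde
  -- determinant in the increasing nodes `exp (ξ a)`; it never vanishes along the way.
  set εt : ℝ → Fin r → ℝ := fun t b => (1 - t) * ε b + t * b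
  set F : ℝ → ℝ := fun t => (Matrix.of fun a b => exp (ξ a * εt t b)).det
  have hεt : ∀ t ∈ Set.Icc (0 : ℝ) 1, StrictMono (εt t) := fun t ht b b' hb => by
    have h1 := hε hb
    have h2 : (b : ℝ) < b' := by exact_mod_cast hb
    rcases eq_or_lt_of_le ht.2 with rfl | h
    · simpa [εt] using h2
    · simp only [εt]; nlinarith [ht.1]
  have hF_cont : ContinuousOn F (Set.Icc 0 1) :=
    (Continuous.matrix_det (continuous_matrix fun a b => by fun_prop)).continuousOn
  have hF1 : 0 < F 1 := by
    have : F 1 = (Matrix.vandermonde fun a => exp (ξ a)).det := by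
      simp only [F]
      congr 1
      ext a b
      simp [εt, Matrix.vandermonde, ← exp_nat_mul, mul_comm]
    rw [this, Matrix.det_vandermonde]
    exact prod_pos fun a _ => prod_pos fun b hb =>
      sub_pos.2 (exp_lt_exp.2 (hξ (mem_Ioi.1 hb)))
  have hF0 : F 0 = (Matrix.of fun a b => exp (ξ a * ε b)).det := by simp [F, εt]
  rw [← hF0]
  by_contra! hneg
  obtain ⟨t, ht, hFt⟩ := intermediate_value_Icc zero_le_one hF_cont ⟨hneg, hF1.le⟩
  exact det_exp_mul_ne_zero hξ (hεt t ht) hFt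

theorem totallyPositive_exp_add_add_mul {k m : ℕ} (ρ : Fin k → ℝ) (γ : Fin m → ℝ) {x : Fin k → ℝ}
    {y : Fin m → ℝ} (hx : StrictMono x) (hy : StrictMono y) :
    TotallyPositive k m (Matrix.of fun i j => exp (ρ i + γ j + x i * y j)) := by
  intro r f g hf hg
  set B : Matrix (Fin r) (Fin r) ℝ := Matrix.of fun a b => exp (x (f a) * y (g b))
  have : (Matrix.of fun i j => exp (ρ i + γ j + x i * y j)).submatrix f g =
      Matrix.of fun a b => exp (ρ (f a)) * Matrix.of (fun a b => exp (γ (g b)) * B a b) a b := by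
    ext a b
    simp [B, ← exp_add, add_assoc]
  rw [this, Matrix.det_mul_column, Matrix.det_mul_row]
  exact mul_pos (prod_pos fun _ _ => exp_pos _) <|
    mul_pos (prod_pos fun _ _ => exp_pos _) (det_exp_mul_pos (hx.comp hf) (hy.comp hg))

theorem TotallyPositive.apply_pos {k m : ℕ} {A : Matrix (Fin k) (Fin m) ℝ}
    (hA : TotallyPositive k m A) (i : Fin k) (j : Fin m) : 0 < A i j := by
  simpa using hA 1 (fun _ => i) (fun _ => j) (Subsingleton.strictMono _) (Subsingleton.strictMono _)

theorem TotallyPositive.mul_lt_mul {k m : ℕ} {A : Matrix (Fin k) (Fin m) ℝ}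
    (hA : TotallyPositive k m A) {i i' : Fin k} {j j' : Fin m} (hi : i < i') (hj : j < j') :
    A i j' * A i' j < A i j * A i' j' := by
  have := hA 2 ![i, i'] ![j, j'] (Fin.strictMono_iff_lt_succ.2 fun a => by fin_cases a; simpa)
    (Fin.strictMono_iff_lt_succ.2 fun a => by fin_cases a; simpa)
  rw [Matrix.det_fin_two] at this
  simpa using this

theorem IsArrLargestEntries.isChain {k m : ℕ} {E : Finset (Fin k × Fin m)}
    (hE : IsArrLargestEntries k m E) : IsChain (· ≤ ·) (E : Set (Fin k × Fin m)) := by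
  obtain ⟨A, v, hA, hEv, hlt⟩ := hE
  have hle : ∀ i j, A i j ≤ v := fun i j => by
    by_cases h : (i, j) ∈ E
    · exact (hEv _ h).le
    · exact (hlt _ h).le
  have key : ∀ p ∈ E, ∀ q ∈ E, p.1 < q.1 → q.2 < p.2 → False := fun p hp q hq h1 h2 => by
    have := hA.mul_lt_mul h1 h2
    rw [hEv p hp, hEv q hq] at this
    nlinarith [mul_le_mul (hle p.1 q.2) (hle q.1 p.2) (hA.apply_pos _ _).le
      ((hA.apply_pos _ _).trans_le (hle p.1 q.2)).le]
  intro p hp q hq _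
  by_contra hpq
  simp only [Prod.le_def, not_or, not_and_or, not_le] at hpq
  obtain ⟨h1 | h1, h2 | h2⟩ := hpq
  · exact h1.asymm h2
  · exact key q hq p hp h1 h2
  · exact key p hp q hq h2 h1
  · exact h1.asymm h2

theorem _root_.IsMaxChain.mem_of_forall_le_or_le {α : Type*} [Preorder α] {C : Set α}
    (hC : IsMaxChain (· ≤ ·) C) {z : α} (hz : ∀ c ∈ C, z ≤ c ∨ c ≤ z) : z ∈ C :=
  (hC.2 (hC.1.insert fun c hc _ => hz c hc) (Set.subset_insert _ _)).symm ▸ Set.mem_insert _ _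

section Grid

variable {k m : ℕ}

def level (p : Fin k × Fin m) : ℕ := p.1 + p.2

theorem level_le (p : Fin k × Fin m) : level p ≤ k + m - 2 := by
  simp only [level]; omega

theorem eq_of_le_of_level_le {p q : Fin k × Fin m} (hpq : p ≤ q) (h : level q ≤ level p) :
    p = q := by
  simp only [Prod.le_def, Fin.le_def, level] at hpq h
  ext <;> omega

theorem latticeStep_iff {p q : Fin k × Fin m} :
    LatticeStep p q ↔ p ≤ q ∧ level q = level p + 1 := by
  simp only [LatticeStep, Prod.le_def, Fin.le_def, level, Fin.ext_iff]
  omega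

theorem exists_le_le_level_eq {p q : Fin k × Fin m} (hpq : p ≤ q) {t : ℕ} (hp : level p ≤ t)
    (hq : t ≤ level q) : ∃ z, p ≤ z ∧ z ≤ q ∧ level z = t := by
  simp only [Prod.le_def, Fin.le_def, level] at hpq hp hq ⊢
  refine ⟨(⟨min (q.1 : ℕ) (t - p.2), by omega⟩, ⟨t - min (q.1 : ℕ) (t - p.2), by omega⟩), ?_⟩
  simp only
  omega

theorem IsChain.le_of_level_le {C : Set (Fin k × Fin m)} (hC : IsChain (· ≤ ·) C)
    {p q : Fin k × Fin m} (hp : p ∈ C) (hq : q ∈ C) (h : level p ≤ level q) : p ≤ q :=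
  (hC.total hp hq).elim id fun hqp => (eq_of_le_of_level_le hqp h).ge

theorem IsChain.eq_of_level_eq {C : Set (Fin k × Fin m)} (hC : IsChain (· ≤ ·) C)
    {p q : Fin k × Fin m} (hp : p ∈ C) (hq : q ∈ C) (h : level p = level q) : p = q :=
  eq_of_le_of_level_le (IsChain.le_of_level_le hC hp hq h.le) h.ge

theorem isMaxChain_of_forall_exists_level_eq {C : Set (Fin k × Fin m)} (hC : IsChain (· ≤ ·) C)
    (h : ∀ t ≤ k + m - 2, ∃ p ∈ C, level p = t) : IsMaxChain (· ≤ ·) C := by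
  refine ⟨hC, fun D hD hCD => hCD.antisymm fun d hd => ?_⟩
  obtain ⟨p, hp, hpd⟩ := h (level d) (level_le d)
  rwa [← IsChain.eq_of_level_eq hD (hCD hp) hd hpd]

theorem IsMaxChain.exists_level_eq (hk : 0 < k) (hm : 0 < m) {C : Finset (Fin k × Fin m)}
    (hC : IsMaxChain (· ≤ ·) (C : Set (Fin k × Fin m))) {t : ℕ} (ht : t ≤ k + m - 2) :
    ∃ p ∈ C, level p = t := by
  have hbot : (⟨0, hk⟩, ⟨0, hm⟩) ∈ C := hC.mem_of_forall_le_or_le fun c _ =>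
    Or.inl (by simp [Prod.le_def, Fin.le_def])
  have htop : (⟨k - 1, by omega⟩, ⟨m - 1, by omega⟩) ∈ C := hC.mem_of_forall_le_or_le fun c _ =>
    Or.inr (by simp only [Prod.le_def, Fin.le_def]; omega)
  obtain ⟨p, hp, hp_max⟩ := (C.filter (level · ≤ t)).exists_max_image level
    ⟨_, mem_filter.2 ⟨hbot, by simp [level]⟩⟩
  obtain ⟨q, hq, hq_min⟩ := (C.filter (t ≤ level ·)).exists_min_image level
    ⟨_, mem_filter.2 ⟨htop, by simp only [level]; omega⟩⟩
  rw [mem_filter] at hp hq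
  -- Every element of `C` lies below `p` or above `q`, so anything between them may join `C`.
  obtain ⟨z, hpz, hzq, hz⟩ :=
    exists_le_le_level_eq (IsChain.le_of_level_le hC.1 hp.1 hq.1 (hp.2.trans hq.2)) hp.2 hq.2
  refine ⟨z, hC.mem_of_forall_le_or_le fun c hc => ?_, hz⟩
  rcases le_total (level c) t with h | h
  · exact .inr ((IsChain.le_of_level_le hC.1 hc hp.1 (hp_max c (mem_filter.2 ⟨hc, h⟩))).trans hpz)
  · exact .inl (hzq.trans (IsChain.le_of_level_le hC.1 hq.1 hc (hq_min c (mem_filter.2 ⟨hc, h⟩))))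

theorem IsMaxChain.card_eq (hk : 0 < k) (hm : 0 < m) {C : Finset (Fin k × Fin m)}
    (hC : IsMaxChain (· ≤ ·) (C : Set (Fin k × Fin m))) : #C = k + m - 1 := by
  have : C.image level = range (k + m - 1) := by
    ext t
    simp only [mem_image, mem_range]
    refine ⟨fun ⟨p, _, hp⟩ => hp ▸ by have := level_le p; omega, fun ht => ?_⟩
    exact IsMaxChain.exists_level_eq hk hm hC (by omega)
  rw [← card_range (k + m - 1), ← this,
    card_image_of_injOn fun p hp q hq => IsChain.eq_of_level_eq hC.1 hp hq]

end Grid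

section LatticePath

variable {k m : ℕ}

theorem IsLatticePathSet.isMaxChain {E : Finset (Fin k × Fin m)} (hE : IsLatticePathSet k m E) :
    IsMaxChain (· ≤ ·) (E : Set (Fin k × Fin m)) := by
  obtain ⟨l, hl, ⟨p, hp, hp1, hp2⟩, ⟨q, hq, hq1, hq2⟩, rfl⟩ := hE
  replace hl : l.IsChain fun a b => a ≤ b ∧ level b = level a + 1 := hl.imp fun _ _ =>
    latticeStep_iff.1
  have hlevel : ∀ i (hi : i < l.length), level l[i] = i := by
    intro i
    induction i with
    | zero =>
      intro hi
      rw [List.head?_eq_getElem?, List.getElem?_eq_getElem hi, Option.some_inj] at hp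
      simp [hp, level, hp1, hp2]
    | succ i ih => intro hi; rw [(List.isChain_iff_getElem.1 hl i hi).2, ih]
  have hlen : l.length = k + m - 1 := by
    have hpos : 0 < l.length := List.length_pos_iff.2 (by rintro rfl; simp at hp)
    have hlast := hlevel (l.length - 1) (by omega)
    rw [List.getLast?_eq_getElem?, List.getElem?_eq_getElem (by omega), Option.some_inj] at hq
    rw [hq, level, hq1, hq2] at hlast
    have := q.1.2
    have := q.2.2
    omega
  have hpw : l.Pairwise fun a b => a ≤ b ∨ b ≤ a := ((hl.imp fun _ _ => And.left).pairwise).imp .inl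
  have : Std.Symm fun a b : Fin k × Fin m => a ≤ b ∨ b ≤ a := ⟨fun _ _ => Or.symm⟩
  refine isMaxChain_of_forall_exists_level_eq
    (fun a ha b hb hab => hpw.forall (by simpa using ha) (by simpa using hb) hab) fun t ht => ?_
  have htl : t < l.length := by omega
  exact ⟨l[t], by simp, hlevel t htl⟩

theorem IsMaxChain.isLatticePathSet (hk : 0 < k) (hm : 0 < m) {C : Finset (Fin k × Fin m)}
    (hC : IsMaxChain (· ≤ ·) (C : Set (Fin k × Fin m))) : IsLatticePathSet k m C := by
  have : ∀ t : Fin (k + m - 1), ∃ p ∈ C, level p = t := fun t =>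
    IsMaxChain.exists_level_eq hk hm hC (by omega)
  choose f hfC hf using this
  refine ⟨List.ofFn f, List.isChain_ofFn.2 fun i hi => latticeStep_iff.2
    ⟨IsChain.le_of_level_le hC.1 (hfC _) (hfC _) (by simp [hf]), by simp [hf]⟩,
    ⟨f ⟨0, by omega⟩, ?_⟩, ⟨f ⟨k + m - 2, by omega⟩, ?_⟩, ?_⟩
  · have h0 := hf ⟨0, by omega⟩
    simp only [level] at h0
    refine ⟨by simp [List.head?_eq_getElem?, show 0 < k + m - 1 by omega], ?_⟩
    omega
  · have hlast := hf ⟨k + m - 2, by omega⟩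
    simp only [level] at hlast
    refine ⟨?_, ?_⟩
    · simp [List.getLast?_eq_getElem?, show k + m - 1 - 1 = k + m - 2 by omega,
        show k + m - 2 < k + m - 1 by omega]
    · omega
  · ext p
    simp only [List.mem_toFinset, List.mem_ofFn]
    refine ⟨fun hp => ⟨⟨level p, by have := level_le p; omega⟩, ?_⟩, fun ⟨i, hi⟩ => hi ▸ hfC i⟩
    exact IsChain.eq_of_level_eq hC.1 (hfC _) hp (hf _)

end LatticePath

section Staircase

variable {k m : ℕ}

/-- The lattice path that passes from row `s` to row `s + 1` in column `c s`. -/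
def staircase (c : ℕ → ℕ) : Finset (Fin k × Fin m) :=
  {p | (∀ s < (p.1 : ℕ), c s ≤ p.2) ∧ ∀ s < k - 1, (p.1 : ℕ) ≤ s → (p.2 : ℕ) ≤ c s}

theorem mem_staircase {c : ℕ → ℕ} {p : Fin k × Fin m} : p ∈ staircase c ↔
    (∀ s < (p.1 : ℕ), c s ≤ p.2) ∧ ∀ s < k - 1, (p.1 : ℕ) ≤ s → (p.2 : ℕ) ≤ c s := by
  simp [staircase]

theorem le_of_mem_staircase {c : ℕ → ℕ} {p q : Fin k × Fin m} (hp : p ∈ staircase c)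
    (hq : q ∈ staircase c) (h : p.1 < q.1) : p ≤ q := by
  rw [mem_staircase] at hp hq
  have h' : (p.1 : ℕ) < q.1 := h
  have := hp.2 p.1 (by omega) le_rfl
  have := hq.1 p.1 h'
  exact Prod.le_def.2 ⟨h.le, by rw [Fin.le_def]; omega⟩

theorem mk_mem_staircase {c : ℕ → ℕ} (hc : Monotone c) {i : Fin k} {j : Fin m} {s : ℕ}
    (hj : (j : ℕ) = c s) (hs : s ≤ i) (hi : (i : ℕ) ≤ s + 1) : (i, j) ∈ staircase c := by
  simp only [mem_staircase, hj]
  exact ⟨fun s' hs' => hc (by omega), fun s' _ hs' => hc (by omega)⟩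

theorem isMaxChain_staircase {c : ℕ → ℕ} (hc : Monotone c) (hcm : ∀ s, c s < m) :
    IsMaxChain (· ≤ ·) ((staircase c : Finset (Fin k × Fin m)) : Set (Fin k × Fin m)) := by
  refine ⟨fun p hp q hq _ => ?_, fun D hD hsub => hsub.antisymm fun d hd => ?_⟩
  · rcases lt_trichotomy p.1 q.1 with h | h | h
    · exact .inl (le_of_mem_staircase hp hq h)
    · simp only [Prod.le_def, h, le_refl, true_and]
      exact le_total _ _
    · exact .inr (le_of_mem_staircase hq hp h)
  -- `d` is comparable with the corners `(s, c s)` and `(s + 1, c s)` of the staircase.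
  refine mem_staircase.2 ⟨fun s hs => ?_, fun s hs hds => ?_⟩
  · have hcorner := hsub (mk_mem_staircase hc (i := ⟨s, by omega⟩) (j := ⟨c s, hcm s⟩) rfl le_rfl
      (by simp))
    rcases hD.total hcorner hd with h | h <;> simp only [Prod.le_def, Fin.le_def] at h <;> omega
  · have hcorner := hsub (mk_mem_staircase hc (i := ⟨s + 1, by omega⟩) (j := ⟨c s, hcm s⟩) rfl
      (by simp) le_rfl)
    rcases hD.total hcorner hd with h | h <;> simp only [Prod.le_def, Fin.le_def] at h <;> omega

theorem IsChain.exists_subset_staircase (hm : 0 < m) {C : Finset (Fin k × Fin m)}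
    (hC : IsChain (· ≤ ·) (C : Set (Fin k × Fin m))) :
    ∃ c, Monotone c ∧ (∀ s, c s < m) ∧ C ⊆ staircase c := by
  refine ⟨fun s => (C.filter fun p => (p.1 : ℕ) ≤ s).sup fun p => (p.2 : ℕ),
    fun s s' hs => sup_mono fun p hp =>
      mem_filter.2 ⟨(mem_filter.1 hp).1, (mem_filter.1 hp).2.trans hs⟩,
    fun s => (Finset.sup_lt_iff hm).2 fun p _ => p.2.2, fun p hp => mem_staircase.2
      ⟨fun s hs => ?_, fun s _ hs => le_sup (f := fun p => (p.2 : ℕ)) (mem_filter.2 ⟨hp, hs⟩)⟩⟩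
  refine Finset.sup_le fun q hq => ?_
  rw [mem_filter] at hq
  rcases hC.total (mem_coe.2 hq.1) (mem_coe.2 hp) with h | h <;>
    simp only [Prod.le_def, Fin.le_def] at h <;> omega

end Staircase

section StaircaseArrangement

variable {k m : ℕ}

def stairDefect (k : ℕ) (c : ℕ → ℕ) (i j : ℕ) : ℝ :=
  ∑ s ∈ range i, max ((c s : ℝ) - j) 0 + ∑ s ∈ Ico i (k - 1), max ((j : ℝ) - c s) 0

theorem stairDefect_nonneg (c : ℕ → ℕ) (i j : ℕ) : 0 ≤ stairDefect k c i j :=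
  add_nonneg (sum_nonneg fun _ _ => le_max_right _ _) (sum_nonneg fun _ _ => le_max_right _ _)

theorem stairDefect_eq_zero_iff {c : ℕ → ℕ} {p : Fin k × Fin m} :
    stairDefect k c p.1 p.2 = 0 ↔ p ∈ staircase c := by
  rw [stairDefect, add_eq_zero_iff_of_nonneg (sum_nonneg fun _ _ => le_max_right _ _)
    (sum_nonneg fun _ _ => le_max_right _ _), sum_eq_zero_iff_of_nonneg fun _ _ => le_max_right _ _,
    sum_eq_zero_iff_of_nonneg fun _ _ => le_max_right _ _, mem_staircase]
  simp only [mem_range, mem_Ico, max_eq_right_iff, sub_nonpos, Nat.cast_le]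
  exact and_congr Iff.rfl ⟨fun h s hs hps => h s ⟨hps, hs⟩, fun h s hs => h s hs.2 hs.1⟩

theorem neg_stairDefect (c : ℕ → ℕ) {i : ℕ} (hi : i ≤ k - 1) (j : ℕ) :
    -stairDefect k c i j =
      -∑ s ∈ range i, (c s : ℝ) + -∑ s ∈ range (k - 1), max ((j : ℝ) - c s) 0 + i * j := by
  have hmax : ∀ s, max ((c s : ℝ) - j) 0 = max ((j : ℝ) - c s) 0 - (j - c s) := fun s => by
    have := max_zero_sub_eq_self ((j : ℝ) - c s)
    rw [neg_sub] at this
    linarith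
  rw [stairDefect, ← sum_range_add_sum_Ico _ hi]
  simp only [hmax, sum_sub_distrib, sum_const, card_range, nsmul_eq_mul]
  ring

theorem isArrLargestEntries_staircase (c : ℕ → ℕ) : IsArrLargestEntries k m (staircase c) := by
  refine ⟨Matrix.of fun i j => exp (-stairDefect k c i j), 1, ?_, fun p hp => ?_, fun p hp => ?_⟩
  · have hval : ∀ n, StrictMono fun i : Fin n => ((i : ℕ) : ℝ) := fun _ =>
      Nat.strictMono_cast.comp Fin.val_strictMono
    convert totallyPositive_exp_add_add_mul (fun i : Fin k => -∑ s ∈ range i, (c s : ℝ))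
      (fun j : Fin m => -∑ s ∈ range (k - 1), max ((j : ℝ) - c s) 0) (hval k) (hval m) using 1
    ext i j
    rw [Matrix.of_apply, Matrix.of_apply, neg_stairDefect c (by omega)]
  · simp [stairDefect_eq_zero_iff.2 hp]
  · have := (stairDefect_nonneg c p.1 p.2).lt_of_ne (Ne.symm (mt stairDefect_eq_zero_iff.1 hp))
    simpa using this

theorem maxArrLargestEntries_iff_isMaxChain (hm : 0 < m) {E : Finset (Fin k × Fin m)} :
    MaxArrLargestEntries k m E ↔ IsMaxChain (· ≤ ·) (E : Set (Fin k × Fin m)) := by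
  constructor
  · rintro ⟨hE, hmax⟩
    obtain ⟨c, hc, hcm, hEc⟩ := IsChain.exists_subset_staircase hm hE.isChain
    rw [hmax _ (isArrLargestEntries_staircase c) hEc]
    exact isMaxChain_staircase hc hcm
  · intro hE
    obtain ⟨c, hc, hcm, hEc⟩ := IsChain.exists_subset_staircase hm hE.1
    have hEc : E = staircase c :=
      coe_injective (hE.2 (isMaxChain_staircase hc hcm).1 (coe_subset.2 hEc))
    refine ⟨hEc ▸ isArrLargestEntries_staircase c, fun E' hE' hEE' => ?_⟩
    exact coe_injective (hE.2 hE'.isChain (coe_subset.2 hEE'))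

end StaircaseArrangement

section Counting

variable {k m : ℕ}

theorem count_add_le (P : ℕ → Prop) [DecidablePred P] (a b : ℕ) :
    Nat.count P (a + b) ≤ Nat.count P a + b := by
  rw [Nat.count_add]
  exact Nat.add_le_add_left (Nat.count_le _) _

theorem count_mem_of_subset_range {S : Finset ℕ} {n : ℕ} (hS : S ⊆ range n) :
    Nat.count (· ∈ S) n = #S := by
  rw [Nat.count_eq_card_filter_range, filter_mem_eq_inter, inter_eq_right.2 hS]

/-- The lattice path whose `t`-th step goes down to the next row exactly when `t ∈ S`. -/
def pathOfDownSteps (S : Finset ℕ) : Finset (Fin k × Fin m) :=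
  {p | Nat.count (· ∈ S) (level p) = p.1}

theorem mem_pathOfDownSteps {S : Finset ℕ} {p : Fin k × Fin m} :
    p ∈ pathOfDownSteps S ↔ Nat.count (· ∈ S) (level p) = p.1 := by
  simp [pathOfDownSteps]

theorem isChain_pathOfDownSteps (S : Finset ℕ) :
    IsChain (· ≤ ·) ((pathOfDownSteps S : Finset (Fin k × Fin m)) : Set (Fin k × Fin m)) := by
  have key : ∀ p ∈ (pathOfDownSteps S : Finset (Fin k × Fin m)), ∀ q ∈ pathOfDownSteps S,
      level p ≤ level q → p ≤ q := fun p hp q hq h => by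
    rw [mem_pathOfDownSteps] at hp hq
    have h1 := Nat.count_monotone (· ∈ S) h
    have h2 := count_add_le (· ∈ S) (level p) (level q - level p)
    rw [Nat.add_sub_cancel' h] at h2
    simp only [level] at h h1 h2 hp hq
    simp only [Prod.le_def, Fin.le_def]
    omega
  intro p hp q hq _
  rcases le_total (level p) (level q) with h | h
  exacts [.inl (key p hp q hq h), .inr (key q hq p hp h)]

theorem exists_mem_pathOfDownSteps_level_eq (hk : 0 < k) (hm : 0 < m) {S : Finset ℕ}
    (hS : S ⊆ range (k + m - 2)) (hcard : #S = k - 1) {t : ℕ} (ht : t ≤ k + m - 2) :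
    ∃ p ∈ (pathOfDownSteps S : Finset (Fin k × Fin m)), level p = t := by
  have htop := count_mem_of_subset_range hS
  have h1 := Nat.count_monotone (· ∈ S) ht
  have h2 := count_add_le (· ∈ S) t (k + m - 2 - t)
  rw [Nat.add_sub_cancel' ht] at h2
  have h3 : Nat.count (· ∈ S) t ≤ t := Nat.count_le _
  refine ⟨(⟨Nat.count (· ∈ S) t, by omega⟩, ⟨t - Nat.count (· ∈ S) t, by omega⟩), ?_, ?_⟩
  · rw [mem_pathOfDownSteps, level, Nat.add_sub_cancel' h3]
  · simp only [level]
    omega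

theorem isMaxChain_pathOfDownSteps (hk : 0 < k) (hm : 0 < m) {S : Finset ℕ}
    (hS : S ⊆ range (k + m - 2)) (hcard : #S = k - 1) :
    IsMaxChain (· ≤ ·) ((pathOfDownSteps S : Finset (Fin k × Fin m)) : Set (Fin k × Fin m)) :=
  isMaxChain_of_forall_exists_level_eq (isChain_pathOfDownSteps S) fun _ ht =>
    exists_mem_pathOfDownSteps_level_eq hk hm hS hcard ht

theorem pathOfDownSteps_injOn (hk : 0 < k) (hm : 0 < m) :
    Set.InjOn (pathOfDownSteps (k := k) (m := m))
      (powersetCard (k - 1) (range (k + m - 2)) : Set (Finset ℕ)) := by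
  intro S hS S' hS' h
  rw [mem_coe, mem_powersetCard] at hS hS'
  have hcount : ∀ t ≤ k + m - 2, Nat.count (· ∈ S) t = Nat.count (· ∈ S') t := fun t ht => by
    obtain ⟨p, hp, rfl⟩ := exists_mem_pathOfDownSteps_level_eq hk hm hS.1 hS.2 ht
    rw [mem_pathOfDownSteps.1 hp, mem_pathOfDownSteps.1 (h ▸ hp)]
  ext t
  by_cases ht : t < k + m - 2
  · refine (Nat.count_succ_eq_succ_count_iff (p := (· ∈ S))).symm.trans ?_
    rw [hcount t ht.le, hcount (t + 1) ht]
    exact Nat.count_succ_eq_succ_count_iff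
  · exact iff_of_false (fun h => ht (mem_range.1 (hS.1 h))) fun h => ht (mem_range.1 (hS'.1 h))

def downSteps (C : Finset (Fin k × Fin m)) : Finset ℕ :=
  (C.filter fun p => ∃ q ∈ C, (q.1 : ℕ) = p.1 + 1 ∧ q.2 = p.2).image level

theorem downSteps_subset_range (C : Finset (Fin k × Fin m)) :
    downSteps C ⊆ range (k + m - 2) := by
  intro t ht
  obtain ⟨p, hp, rfl⟩ := mem_image.1 ht
  obtain ⟨-, q, -, hq, -⟩ := mem_filter.1 hp
  have := q.1.2
  have := p.2.2
  simp only [mem_range, level]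
  omega

theorem IsMaxChain.count_downSteps (hk : 0 < k) (hm : 0 < m) {C : Finset (Fin k × Fin m)}
    (hC : IsMaxChain (· ≤ ·) (C : Set (Fin k × Fin m))) {p : Fin k × Fin m} (hp : p ∈ C) :
    Nat.count (· ∈ downSteps C) (level p) = p.1 := by
  induction hpt : level p generalizing p with
  | zero =>
    simp only [level] at hpt
    simp only [Nat.count_zero]
    omega
  | succ t ih =>
    obtain ⟨p', hp', hp't⟩ := IsMaxChain.exists_level_eq hk hm hC (t := t)
      (by have := level_le p; omega)
    have hle := IsChain.le_of_level_le hC.1 hp' hp (by omega)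
    have hstep : t ∈ downSteps C ↔ (p.1 : ℕ) = p'.1 + 1 := by
      refine ⟨fun ht => ?_, fun h => mem_image.2 ⟨p', mem_filter.2 ⟨hp', p, hp, h, ?_⟩, hp't⟩⟩
      · obtain ⟨a, ha, hat⟩ := mem_image.1 ht
        obtain ⟨haC, b, hb, hb1, hb2⟩ := mem_filter.1 ha
        obtain rfl := IsChain.eq_of_level_eq hC.1 haC hp' (hat.trans hp't.symm)
        obtain rfl := IsChain.eq_of_level_eq hC.1 hb hp (by simp only [level] at *; omega)
        exact hb1
      · simp only [Prod.le_def, Fin.le_def, level] at hle hpt hp't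
        ext
        omega
    rw [Nat.count_succ, ih hp' hp't]
    simp only [Prod.le_def, Fin.le_def, level] at hle hpt hp't
    split_ifs with h <;> [have := hstep.1 h; have := mt hstep.2 h] <;> omega

theorem IsMaxChain.eq_pathOfDownSteps (hk : 0 < k) (hm : 0 < m) {C : Finset (Fin k × Fin m)}
    (hC : IsMaxChain (· ≤ ·) (C : Set (Fin k × Fin m))) : C = pathOfDownSteps (downSteps C) := by
  ext p
  rw [mem_pathOfDownSteps]
  refine ⟨IsMaxChain.count_downSteps hk hm hC, fun h => ?_⟩
  obtain ⟨p', hp', hpl⟩ := IsMaxChain.exists_level_eq hk hm hC (level_le p)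
  have := IsMaxChain.count_downSteps hk hm hC hp'
  rw [hpl] at this
  simp only [level] at hpl
  convert hp'
  ext <;> omega

theorem IsMaxChain.card_downSteps (hk : 0 < k) (hm : 0 < m) {C : Finset (Fin k × Fin m)}
    (hC : IsMaxChain (· ≤ ·) (C : Set (Fin k × Fin m))) : #(downSteps C) = k - 1 := by
  obtain ⟨p, hp, hpl⟩ := IsMaxChain.exists_level_eq hk hm hC (t := k + m - 2) le_rfl
  rw [← count_mem_of_subset_range (downSteps_subset_range C), ← hpl,
    IsMaxChain.count_downSteps hk hm hC hp]
  simp only [level] at hpl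
  omega

theorem card_isMaxChain (hk : 0 < k) (hm : 0 < m) :
    Nat.card {C : Finset (Fin k × Fin m) // IsMaxChain (· ≤ ·) (C : Set (Fin k × Fin m))} =
      (k + m - 2).choose (k - 1) := by
  let f : powersetCard (k - 1) (range (k + m - 2)) →
      {C : Finset (Fin k × Fin m) // IsMaxChain (· ≤ ·) (C : Set (Fin k × Fin m))} := fun S =>
    ⟨pathOfDownSteps S, isMaxChain_pathOfDownSteps hk hm (mem_powersetCard.1 S.2).1
      (mem_powersetCard.1 S.2).2⟩
  have hf : Function.Bijective f := by
    refine ⟨fun S S' h => Subtype.ext (pathOfDownSteps_injOn hk hm S.2 S'.2 congr($h.1)),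
      fun ⟨C, hC⟩ => ⟨⟨downSteps C, mem_powersetCard.2 ⟨downSteps_subset_range C,
        IsMaxChain.card_downSteps hk hm hC⟩⟩, Subtype.ext ?_⟩⟩
    exact (IsMaxChain.eq_pathOfDownSteps hk hm hC).symm
  rw [← Nat.card_congr (Equiv.ofBijective f hf), Nat.card_eq_finsetCard, card_powersetCard,
    card_range]

end Counting

theorem maximal_largest_entries (k m : ℕ) (hk : 1 ≤ k) (hm : 1 ≤ m) :
    (∀ E : Finset (Fin k × Fin m), MaxArrLargestEntries k m E → E.card = k + m - 1) ∧
    (∀ E : Finset (Fin k × Fin m), MaxArrLargestEntries k m E ↔ IsLatticePathSet k m E) ∧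
    Nat.card {E : Finset (Fin k × Fin m) // MaxArrLargestEntries k m E} =
      (k + m - 2).choose (k - 1) := by
  have hiff : ∀ E : Finset (Fin k × Fin m),
      MaxArrLargestEntries k m E ↔ IsMaxChain (· ≤ ·) (E : Set (Fin k × Fin m)) := fun _ =>
    maxArrLargestEntries_iff_isMaxChain hm
  refine ⟨fun E hE => IsMaxChain.card_eq hk hm ((hiff E).1 hE), fun E => (hiff E).trans
    ⟨IsMaxChain.isLatticePathSet hk hm, IsLatticePathSet.isMaxChain⟩, ?_⟩
  rw [← card_isMaxChain hk hm]
  exact Nat.card_congr (Equiv.subtypeEquivRight hiff)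

end Stmt16
end

section
/- Let n ≥ 3. The maximum cardinality of an arrangement of smallest positive minors in Gr^≥(2,n), and likewise the maximum cardinality of an arrangement of largest positive minors in Gr^≥(2,n), equals 3m² if n = 3m, equals m(3m+2) if n = 3m+1, and equals (m+1)(3m+1) if n = 3m+2 (equivalently, it equals ⌊n²/3⌋). -/
/-!
An arrangement of smallest or of largest positive minors is a set of pairs on which the Plücker
coordinates take one common value `v > 0`. Its graph on the columns contains no `K₄`: for
`i < j < k < l` spanning a `K₄` the Plücker relation `Δ_ik Δ_jl = Δ_ij Δ_kl + Δ_il Δ_jk` would read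
`v² = 2 v²`. By Turán's theorem such a graph has at most `⌊n²/3⌋` edges. Conversely, cut the
columns into three intervals of sizes as equal as possible and give the columns of the three
intervals the vectors `(1,0)`, `(1,1)`, `(0,1)`: every minor is then `0` or `1`, and the minors
equal to `1` form the Turán graph `T(n,3)`, an arrangement of both kinds.
-/

namespace Stmt18

/-- The `2×2` minor of a `2×n` matrix on columns `i < j`. -/
def minor2 (n : ℕ) (A : Matrix (Fin 2) (Fin n) ℝ) (i j : Fin n) : ℝ :=
  A 0 i * A 1 j - A 0 j * A 1 i

/-- `A` represents a point of the nonnegative Grassmannian `Gr^≥(2,n)`: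
a rank-2 matrix all of whose `2×2` minors (on columns `i < j`) are nonnegative. -/
def NonnegGr2 (n : ℕ) (A : Matrix (Fin 2) (Fin n) ℝ) : Prop :=
  A.rank = 2 ∧ ∀ i j : Fin n, i < j → 0 ≤ minor2 n A i j

/-- An arrangement of smallest positive minors in `Gr^≥(2,n)`. -/
def IsArrSmallestPos (n : ℕ) (𝒜 : Finset (Finset (Fin n))) : Prop :=
  (∀ e ∈ 𝒜, e.card = 2) ∧
    ∃ (A : Matrix (Fin 2) (Fin n) ℝ) (v : ℝ), NonnegGr2 n A ∧ 0 < v ∧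
      (∀ i j : Fin n, i < j → {i, j} ∈ 𝒜 → minor2 n A i j = v) ∧
      (∀ i j : Fin n, i < j → {i, j} ∉ 𝒜 →
        minor2 n A i j = 0 ∨ v < minor2 n A i j)

/-- An arrangement of largest positive minors in `Gr^≥(2,n)`. -/
def IsArrLargestPos (n : ℕ) (𝒜 : Finset (Finset (Fin n))) : Prop :=
  (∀ e ∈ 𝒜, e.card = 2) ∧
    ∃ (A : Matrix (Fin 2) (Fin n) ℝ) (v : ℝ), NonnegGr2 n A ∧ 0 < v ∧
      (∀ i j : Fin n, i < j → {i, j} ∈ 𝒜 → minor2 n A i j = v) ∧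
      (∀ i j : Fin n, i < j → {i, j} ∉ 𝒜 → minor2 n A i j < v)

open Finset SimpleGraph

section PairGraph

variable {V : Type*} [DecidableEq V]

def pairGraph (𝒜 : Finset (Finset V)) : SimpleGraph V where
  Adj x y := x ≠ y ∧ {x, y} ∈ 𝒜
  symm := ⟨fun x y h => ⟨h.1.symm, pair_comm x y ▸ h.2⟩⟩
  loopless := ⟨fun _ h => h.1 rfl⟩

@[simp]
lemma pairGraph_adj {𝒜 : Finset (Finset V)} {x y : V} :
    (pairGraph 𝒜).Adj x y ↔ x ≠ y ∧ {x, y} ∈ 𝒜 :=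
  Iff.rfl

instance (𝒜 : Finset (Finset V)) : DecidableRel (pairGraph 𝒜).Adj :=
  fun _ _ => decidable_of_iff' _ pairGraph_adj

def edgePairs (G : SimpleGraph V) [Fintype G.edgeSet] : Finset (Finset V) :=
  G.edgeFinset.image Sym2.toFinset

lemma Sym2.toFinset_injective : Function.Injective (Sym2.toFinset : Sym2 V → Finset V) :=
  fun z w h => Sym2.ext fun x => by rw [← Sym2.mem_toFinset, h, Sym2.mem_toFinset]

variable {G : SimpleGraph V} [Fintype G.edgeSet]

lemma mem_edgePairs {x y : V} : {x, y} ∈ edgePairs G ↔ G.Adj x y := by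
  rw [edgePairs, ← Sym2.toFinset_mk_eq, Sym2.toFinset_injective.mem_finset_image,
    mem_edgeFinset, mem_edgeSet]

lemma card_edgePairs : #(edgePairs G) = #G.edgeFinset :=
  card_image_of_injective _ Sym2.toFinset_injective

lemma card_eq_two_of_mem_edgePairs {e : Finset V} (he : e ∈ edgePairs G) : #e = 2 := by
  obtain ⟨z, hz, rfl⟩ := mem_image.1 he
  exact Sym2.card_toFinset_of_not_isDiag z (not_isDiag_of_mem_edgeFinset hz)

lemma edgePairs_pairGraph [Fintype V] {𝒜 : Finset (Finset V)} (h𝒜 : ∀ e ∈ 𝒜, #e = 2) :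
    edgePairs (pairGraph 𝒜) = 𝒜 := by
  ext e
  constructor
  · intro he
    obtain ⟨x, y, -, rfl⟩ := card_eq_two.1 (card_eq_two_of_mem_edgePairs he)
    exact (pairGraph_adj.1 (mem_edgePairs.1 he)).2
  · intro he
    obtain ⟨x, y, hxy, rfl⟩ := card_eq_two.1 (h𝒜 _ he)
    exact mem_edgePairs.2 (pairGraph_adj.2 ⟨hxy, he⟩)

end PairGraph

theorem card_edgeFinset_turanGraph_three (n : ℕ) : #(turanGraph n 3).edgeFinset = n ^ 2 / 3 := by
  rw [card_edgeFinset_turanGraph]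
  obtain ⟨q, r, hr, rfl⟩ : ∃ q r, r < 3 ∧ n = r + 3 * q :=
    ⟨n / 3, n % 3, Nat.mod_lt _ (by norm_num), (Nat.mod_add_div n 3).symm⟩
  rw [show (r + 3 * q) % 3 = r by omega,
    show (r + 3 * q) ^ 2 = r ^ 2 + 3 * (q * (2 * r + 3 * q)) by ring]
  interval_cases r <;> simp <;> omega

section Minors

variable {n : ℕ}

theorem minor2_mul_minor2 (A : Matrix (Fin 2) (Fin n) ℝ) (i j k l : Fin n) :
    minor2 n A i k * minor2 n A j l =
      minor2 n A i j * minor2 n A k l + minor2 n A i l * minor2 n A j k := by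
  unfold minor2; ring

theorem rank_eq_two_of_minor2_ne_zero {A : Matrix (Fin 2) (Fin n) ℝ} {i j : Fin n}
    (h : minor2 n A i j ≠ 0) : A.rank = 2 := by
  have hdet : (A.submatrix id ![i, j]).det ≠ 0 := by
    simpa [Matrix.det_fin_two, minor2] using h
  refine le_antisymm A.rank_le_height ?_
  calc 2 = (A.submatrix id ![i, j]).rank := by
        rw [Matrix.rank_of_isUnit _ ((Matrix.isUnit_iff_isUnit_det _).2 hdet.isUnit),
          Fintype.card_fin]
    _ ≤ A.rank := A.rank_submatrix_le _ _

theorem pairGraph_cliqueFree_four {𝒜 : Finset (Finset (Fin n))} {A : Matrix (Fin 2) (Fin n) ℝ}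
    {v : ℝ} (hv : v ≠ 0) (h𝒜 : ∀ i j : Fin n, i < j → {i, j} ∈ 𝒜 → minor2 n A i j = v) :
    (pairGraph 𝒜).CliqueFree 4 := by
  intro s hs
  set f := s.orderEmbOfFin hs.card_eq
  have hf : ∀ a b : Fin 4, a < b → minor2 n A (f a) (f b) = v := fun a b hab =>
    h𝒜 _ _ (f.strictMono hab) (pairGraph_adj.1 (hs.isClique (orderEmbOfFin_mem _ _ a)
      (orderEmbOfFin_mem _ _ b) (f.injective.ne hab.ne))).2
  have hP := minor2_mul_minor2 A (f 0) (f 1) (f 2) (f 3)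
  rw [hf 0 2 (by decide), hf 1 3 (by decide), hf 0 1 (by decide), hf 2 3 (by decide),
    hf 0 3 (by decide), hf 1 2 (by decide)] at hP
  exact hv (mul_self_eq_zero.1 (by linarith))

theorem card_le_of_minor2_eq {𝒜 : Finset (Finset (Fin n))} (h𝒜 : ∀ e ∈ 𝒜, #e = 2)
    {A : Matrix (Fin 2) (Fin n) ℝ} {v : ℝ} (hv : v ≠ 0)
    (hA : ∀ i j : Fin n, i < j → {i, j} ∈ 𝒜 → minor2 n A i j = v) :
    #𝒜 ≤ #(turanGraph n 3).edgeFinset :=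
  calc #𝒜 = #(pairGraph 𝒜).edgeFinset := by rw [← card_edgePairs, edgePairs_pairGraph h𝒜]
    _ ≤ _ := (isTuranMaximal_turanGraph (by norm_num)).2 (pairGraph_cliqueFree_four hv hA)

theorem isArr_of_minor2_eq_ite {𝒜 : Finset (Finset (Fin n))} (h𝒜 : ∀ e ∈ 𝒜, #e = 2)
    {A : Matrix (Fin 2) (Fin n) ℝ} (hrank : A.rank = 2) {v : ℝ} (hv : 0 < v)
    (hA : ∀ i j : Fin n, i < j → minor2 n A i j = if {i, j} ∈ 𝒜 then v else 0) :
    IsArrSmallestPos n 𝒜 ∧ IsArrLargestPos n 𝒜 := by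
  have hnonneg : NonnegGr2 n A := ⟨hrank, fun i j hij => by rw [hA i j hij]; split_ifs <;> simp [hv.le]⟩
  refine ⟨⟨h𝒜, A, v, hnonneg, hv, fun i j hij h => ?_, fun i j hij h => ?_⟩,
    ⟨h𝒜, A, v, hnonneg, hv, fun i j hij h => ?_, fun i j hij h => ?_⟩⟩ <;>
    simp [hA i j hij, h, hv]

def blockMatrix (b : Fin n → Fin 3) : Matrix (Fin 2) (Fin n) ℝ :=
  Matrix.of fun r i => ![![1, 1, 0], ![0, 1, 1]] r (b i)

theorem minor2_blockMatrix {b : Fin n → Fin 3} {i j : Fin n} (h : b i ≤ b j) :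
    minor2 n (blockMatrix b) i j = if b i = b j then 0 else 1 := by
  simp only [minor2, blockMatrix, Matrix.of_apply]
  generalize b i = k, b j = l at h ⊢
  fin_cases k <;> fin_cases l <;> simp_all

end Minors

section Construction

variable (n : ℕ)

/-- Sorts `Fin n` by residue mod `3`, so that the parts of `turanGraph n 3` become intervals. -/
def turanSort : Equiv.Perm (Fin n) :=
  Tuple.sort fun i : Fin n => Fin.ofNat 3 i

def turanBlock (i : Fin n) : Fin 3 :=
  Fin.ofNat 3 (turanSort n i)

theorem monotone_turanBlock : Monotone (turanBlock n) :=
  Tuple.monotone_sort fun i : Fin n => Fin.ofNat 3 i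

def turanArrangement : Finset (Finset (Fin n)) :=
  edgePairs ((turanGraph n 3).comap (turanSort n))

variable {n}

theorem mem_turanArrangement {i j : Fin n} :
    {i, j} ∈ turanArrangement n ↔ turanBlock n i ≠ turanBlock n j := by
  simp only [turanArrangement, mem_edgePairs, comap_adj, turanGraph_adj, turanBlock, Ne,
    Fin.ext_iff, Fin.val_ofNat]

theorem card_turanArrangement : #(turanArrangement n) = #(turanGraph n 3).edgeFinset := by
  rw [turanArrangement, card_edgePairs, (Iso.comap _ _).card_edgeFinset_eq]

theorem minor2_blockMatrix_turanBlock {i j : Fin n} (hij : i < j) :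
    minor2 n (blockMatrix (turanBlock n)) i j = if {i, j} ∈ turanArrangement n then 1 else 0 := by
  rw [minor2_blockMatrix (monotone_turanBlock n hij.le)]
  simp only [mem_turanArrangement, ite_not]

theorem rank_blockMatrix_turanBlock (hn : 2 ≤ n) : (blockMatrix (turanBlock n)).rank = 2 := by
  set i := (turanSort n).symm ⟨0, by omega⟩
  set j := (turanSort n).symm ⟨1, by omega⟩
  have hblock : turanBlock n i < turanBlock n j := by simp [i, j, turanBlock, Fin.lt_def]
  have hij : i < j := (monotone_turanBlock n).reflect_lt hblock
  refine rank_eq_two_of_minor2_ne_zero (i := i) (j := j) ?_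
  rw [minor2_blockMatrix hblock.le, if_neg hblock.ne]
  exact one_ne_zero

theorem isArr_turanArrangement (hn : 2 ≤ n) :
    IsArrSmallestPos n (turanArrangement n) ∧ IsArrLargestPos n (turanArrangement n) :=
  isArr_of_minor2_eq_ite (fun _ => card_eq_two_of_mem_edgePairs) (rank_blockMatrix_turanBlock hn)
    one_pos fun _ _ => minor2_blockMatrix_turanBlock

end Construction

theorem isGreatest_card_arrangements {n : ℕ} (hn : 2 ≤ n) :
    IsGreatest {N : ℕ | ∃ 𝒜, IsArrSmallestPos n 𝒜 ∧ 𝒜.card = N} (n ^ 2 / 3) ∧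
      IsGreatest {N : ℕ | ∃ 𝒜, IsArrLargestPos n 𝒜 ∧ 𝒜.card = N} (n ^ 2 / 3) := by
  rw [← card_edgeFinset_turanGraph_three, ← card_turanArrangement]
  obtain ⟨hsmall, hlarge⟩ := isArr_turanArrangement hn
  refine ⟨⟨⟨_, hsmall, rfl⟩, ?_⟩, ⟨⟨_, hlarge, rfl⟩, ?_⟩⟩ <;>
    rintro _ ⟨𝒜, ⟨h𝒜, A, v, -, hv, hA, -⟩, rfl⟩ <;>
    exact card_turanArrangement (n := n) ▸ card_le_of_minor2_eq h𝒜 hv.ne' hA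

theorem max_size_arrangements_nonneg_Gr2n (n m : ℕ) (hn : 3 ≤ n) :
    (n = 3 * m →
      IsGreatest {N : ℕ | ∃ 𝒜, IsArrSmallestPos n 𝒜 ∧ 𝒜.card = N} (3 * m ^ 2) ∧
      IsGreatest {N : ℕ | ∃ 𝒜, IsArrLargestPos n 𝒜 ∧ 𝒜.card = N} (3 * m ^ 2)) ∧
    (n = 3 * m + 1 →
      IsGreatest {N : ℕ | ∃ 𝒜, IsArrSmallestPos n 𝒜 ∧ 𝒜.card = N} (m * (3 * m + 2)) ∧
      IsGreatest {N : ℕ | ∃ 𝒜, IsArrLargestPos n 𝒜 ∧ 𝒜.card = N} (m * (3 * m + 2))) ∧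
    (n = 3 * m + 2 →
      IsGreatest {N : ℕ | ∃ 𝒜, IsArrSmallestPos n 𝒜 ∧ 𝒜.card = N} ((m + 1) * (3 * m + 1)) ∧
      IsGreatest {N : ℕ | ∃ 𝒜, IsArrLargestPos n 𝒜 ∧ 𝒜.card = N} ((m + 1) * (3 * m + 1))) := by
  have h := isGreatest_card_arrangements (n := n) (by omega)
  refine ⟨fun hm => ?_, fun hm => ?_, fun hm => ?_⟩ <;> subst hm
  · rwa [show (3 * m) ^ 2 / 3 = 3 * m ^ 2 by
      rw [show (3 * m) ^ 2 = 3 * (3 * m ^ 2) by ring]; omega] at h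
  · rwa [show (3 * m + 1) ^ 2 / 3 = m * (3 * m + 2) by
      rw [show (3 * m + 1) ^ 2 = 3 * (m * (3 * m + 2)) + 1 by ring]; omega] at h
  · rwa [show (3 * m + 2) ^ 2 / 3 = (m + 1) * (3 * m + 1) by
      rw [show (3 * m + 2) ^ 2 = 3 * ((m + 1) * (3 * m + 1)) + 1 by ring]; omega] at h

end Stmt18
end
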